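/- arXiv:1807.02156 — 6 statements merged into one kernel-verified Lean document; each statement's English description precedes it below -/
import Mathlib

section
/- Let n ≥ 1 and let A be a set partition of {1,…,n}. Then the depth index and the intertwining number of A satisfy t(A) + i(A) = n(n−1)/2. -/
open Finset
open scoped Classical

noncomputable section

/-- The arcs of a set partition `A` of `{1,…,n}`: pairs `(i,j)` with `i < j`, `i` and `j` in
the same block, and no element of that block strictly between `i` and `j`. -/
noncomputable def arcs (n : ℕ) (A : Finpartition (Finset.Icc 1 n)) : Finset (ℕ × ℕ) :=
  (Finset.Icc 1 n ×ˢ Finset.Icc 1 n).filter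
    (fun p => p.1 < p.2 ∧ ∃ B ∈ A.parts, p.1 ∈ B ∧ p.2 ∈ B ∧
      ∀ k ∈ B, ¬ (p.1 < k ∧ k < p.2))

/-- The depth of a vertex `v`: the number of arcs `(i,j)` with `i < v < j`. -/
noncomputable def vertexDepth (n : ℕ) (A : Finpartition (Finset.Icc 1 n)) (v : ℕ) : ℕ :=
  ((arcs n A).filter (fun p => p.1 < v ∧ v < p.2)).card

/-- The depth of an arc `α = (u,v)`: the number of arcs `(i,j)` with `i < u < v < j`. -/
noncomputable def arcDepth (n : ℕ) (A : Finpartition (Finset.Icc 1 n)) (α : ℕ × ℕ) : ℕ :=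
  ((arcs n A).filter (fun p => p.1 < α.1 ∧ α.2 < p.2)).card

/-- The depth index `t(A) = Σ_{i=1}^m (n−i) − Σ_{v=1}^n depth(v) + Σ_{α} depth(α)`,
where `m` is the number of arcs of `A`. -/
noncomputable def depthIndex (n : ℕ) (A : Finpartition (Finset.Icc 1 n)) : ℤ :=
  (∑ i ∈ Finset.Icc 1 (arcs n A).card, ((n : ℤ) - (i : ℤ)))
    - ∑ v ∈ Finset.Icc 1 n, (vertexDepth n A v : ℤ)
    + ∑ α ∈ arcs n A, (arcDepth n A α : ℤ)

/-- The intertwining number of `A`: the sum over all unordered pairs of distinct blocks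
`{B, C}` of the number of pairs `(b,c) ∈ B × C` with no element of `B ∪ C` strictly between
them.  Since distinct blocks are disjoint, this equals the number of pairs `(x,y)` with
`x < y` lying in different blocks `B ∋ x`, `C ∋ y` such that no element of `B ∪ C` lies
strictly between `x` and `y`. -/
noncomputable def inumber (n : ℕ) (A : Finpartition (Finset.Icc 1 n)) : ℕ :=
  ((Finset.Icc 1 n ×ˢ Finset.Icc 1 n).filter
    (fun p => p.1 < p.2 ∧ ∃ B ∈ A.parts, ∃ C ∈ A.parts, B ≠ C ∧ p.1 ∈ B ∧ p.2 ∈ C ∧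
      ∀ k ∈ B ∪ C, ¬ (p.1 < k ∧ k < p.2))).card

/-- `u` and `v` lie in the same block of `A`. -/
def sameBlock (n : ℕ) (A : Finpartition (Finset.Icc 1 n)) (u v : ℕ) : Prop :=
  ∃ B ∈ A.parts, u ∈ B ∧ v ∈ B

/-- The partner of `v`: `0` if `v` is the minimum of its block, and otherwise the largest
element of the block of `v` smaller than `v`. -/
noncomputable def partner (n : ℕ) (A : Finpartition (Finset.Icc 1 n)) (v : ℕ) : ℕ :=
  ((Finset.Icc 1 n).filter (fun u => u < v ∧ sameBlock n A u v)).sup id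

/-- The partial depth index `t_v(A) = u + #{arcs (i,j) : u < i < j < v}`, where `u` is the
partner of `v`. -/
noncomputable def partialDepthIndex (n : ℕ) (A : Finpartition (Finset.Icc 1 n)) (v : ℕ) : ℕ :=
  partner n A v +
    ((arcs n A).filter (fun p => partner n A v < p.1 ∧ p.2 < v)).card

/-- The partial intertwining number `i_v(A)`: the number of `i` with `u < i < v` (where `u`
is the partner of `v`) such that `i` has no successor in its block, or the successor of `i`
in its block is greater than `v`; i.e. every element of the block of `i` larger than `i`
is larger than `v`. -/
noncomputable def partialInumber (n : ℕ) (A : Finpartition (Finset.Icc 1 n)) (v : ℕ) : ℕ :=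
  ((Finset.Icc 1 n).filter
    (fun i => partner n A v < i ∧ i < v ∧
      ∀ j, sameBlock n A i j → i < j → v < j)).card

/-- The adjacency matrix of `A`: the `n × n` rational matrix whose `(i,j)` entry is `1` if
`(i+1, j+1)` is an arc of `A` (indices shifted from `Fin n` to `{1,…,n}`) and `0` otherwise. -/
noncomputable def adjMatrix (n : ℕ) (A : Finpartition (Finset.Icc 1 n)) :
    Matrix (Fin n) (Fin n) ℚ :=
  fun i j => if ((i : ℕ) + 1, (j : ℕ) + 1) ∈ arcs n A then 1 else 0

/-- The rank-control matrix entry `r_{i,j}` of an `n × n` matrix `M`: the rank of the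
submatrix of `M` consisting of rows `{i, i+1, …, n}` and columns `{1, …, j}`
(in 1-based indexing). -/
noncomputable def rankControl (n : ℕ) (M : Matrix (Fin n) (Fin n) ℚ) (i j : ℕ) : ℕ :=
  (M.submatrix (fun k : {k : Fin n // i ≤ (k : ℕ) + 1} => (k : Fin n))
               (fun l : {l : Fin n // (l : ℕ) + 1 ≤ j} => (l : Fin n))).rank

end

/-!
Write `u = partner v` for the predecessor of `v` in its block (`0` if there is none). Each `i`
with `u < i < v` either has its block successor before `v`, and is then the left end of an arc
nested in `(u, v)`, or is counted by `i_v(A)`; hence `t_v(A) + i_v(A) = v - 1`, and summing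
over `v` gives `n(n-1)/2`. Grouping intertwining pairs by their right element shows that the
`i_v(A)` add up to `i(A)`. For `t(A)` one regroups by arcs instead: the arcs are exactly the
pairs `(partner v, v)` with `partner v ≠ 0`, so the `v > b` at which an arc `(a, b)` is not
counted in `t_v(A)` correspond to the arcs `(c, v)` with `a ≤ c` and `b < v`; together with the
arcs covering `(a, b)` these are all arcs ending after `b`. Finally the terms `n - k` of `t(A)`
are matched with the arcs through the rank of their right ends.
-/

theorem Finset.sum_range_card_eq_sum_card_filter_lt {ι α M : Type*} [LinearOrder α]
    [AddCommMonoid M] {s : Finset ι} {f : ι → α} (hf : Set.InjOn f s) (g : ℕ → M) :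
    ∑ k ∈ range #s, g k = ∑ x ∈ s, g #{y ∈ s | f x < f y} := by
  have hlt {x x'} (hx' : x' ∈ s) (hxx' : f x < f x') :
      #{y ∈ s | f x' < f y} < #{y ∈ s | f x < f y} := by
    refine card_lt_card (ssubset_iff_of_subset ?_ |>.2 ⟨x', ?_, ?_⟩)
    · exact fun y hy => mem_filter.2 ⟨(mem_filter.1 hy).1, hxx'.trans (mem_filter.1 hy).2⟩
    · exact mem_filter.2 ⟨hx', hxx'⟩
    · simp
  have hinj : Set.InjOn (fun x => #{y ∈ s | f x < f y}) s := by
    intro x hx x' hx' h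
    by_contra hne
    rcases (hf.ne hx hx' hne).lt_or_gt with hxx' | hxx'
    · exact (hlt hx' hxx').ne' h
    · exact (hlt hx hxx').ne h
  have himage : s.image (fun x => #{y ∈ s | f x < f y}) = range #s := by
    refine eq_of_subset_of_card_le (fun k hk => ?_) (by rw [card_image_of_injOn hinj, card_range])
    obtain ⟨x, hx, rfl⟩ := mem_image.1 hk
    exact mem_range.2 (card_lt_card (filter_ssubset.2 ⟨x, hx, lt_irrefl _⟩))
  rw [← himage, sum_image hinj]

theorem Finset.card_filter_and_add_card_filter_not_and {α : Type*} (s : Finset α)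
    (p q : α → Prop) [DecidablePred p] [DecidablePred q] :
    #{x ∈ s | p x ∧ q x} + #{x ∈ s | ¬p x ∧ q x} = #{x ∈ s | q x} := by
  rw [← card_filter_add_card_filter_not (s := {x ∈ s | q x}) p, filter_filter, filter_filter]
  simp only [and_comm]

section

variable {n : ℕ} {A : Finpartition (Icc 1 n)}

lemma sameBlock.mem_Icc {u v : ℕ} (h : sameBlock n A u v) : u ∈ Icc 1 n ∧ v ∈ Icc 1 n :=
  let ⟨_, hB, hu, hv⟩ := h
  ⟨A.le hB hu, A.le hB hv⟩

lemma lt_and_sameBlock_of_mem_arcs {p : ℕ × ℕ} (hp : p ∈ arcs n A) :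
    p.1 < p.2 ∧ sameBlock n A p.1 p.2 := by
  obtain ⟨-, hlt, B, hB, h1, h2, -⟩ := mem_filter.1 hp
  exact ⟨hlt, B, hB, h1, h2⟩

lemma le_partner {u v : ℕ} (hu : u ∈ Icc 1 n) (huv : u < v) (h : sameBlock n A u v) :
    u ≤ partner n A v :=
  le_sup (f := id) (mem_filter.2 ⟨hu, huv, h⟩)

lemma partner_lt_and_sameBlock {v : ℕ} (h : 0 < partner n A v) :
    partner n A v < v ∧ sameBlock n A (partner n A v) v := by
  rcases eq_empty_or_nonempty {u ∈ Icc 1 n | u < v ∧ sameBlock n A u v} with he | hne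
  · simp [partner, he] at h
  · obtain ⟨u, hu, he⟩ := exists_mem_eq_sup _ hne id
    rw [partner, he]
    exact (mem_filter.1 hu).2

lemma partner_lt {v : ℕ} (hv : 0 < v) : partner n A v < v := by
  rcases Nat.eq_zero_or_pos (partner n A v) with h | h
  · rwa [h]
  · exact (partner_lt_and_sameBlock h).1

lemma mem_arcs_iff_partner {p : ℕ × ℕ} : p ∈ arcs n A ↔ 0 < p.1 ∧ partner n A p.2 = p.1 := by
  constructor
  · intro hp
    obtain ⟨hmem, hlt, B, hB, h1, h2, hgap⟩ := mem_filter.1 hp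
    have h1n : p.1 ∈ Icc 1 n := (mem_product.1 hmem).1
    refine ⟨(mem_Icc.1 h1n).1, le_antisymm ?_ (le_partner h1n hlt ⟨B, hB, h1, h2⟩)⟩
    by_contra! hgt
    obtain ⟨hu, C, hC, huC, hvC⟩ := partner_lt_and_sameBlock (A := A) (p.1.zero_le.trans_lt hgt)
    rw [A.eq_of_mem_parts hB hC h2 hvC] at hgap
    exact hgap _ huC ⟨hgt, hu⟩
  · rintro ⟨hpos, hp⟩
    obtain ⟨hlt, hsb⟩ := partner_lt_and_sameBlock (A := A) (hp ▸ hpos)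
    rw [hp] at hlt hsb
    obtain ⟨B, hB, h1, h2⟩ := hsb
    refine mem_filter.2 ⟨mem_product.2 (sameBlock.mem_Icc ⟨B, hB, h1, h2⟩), hlt, B, hB, h1, h2, ?_⟩
    rintro k hk ⟨h1k, hk2⟩
    have := le_partner (A.le hB hk) hk2 ⟨B, hB, hk, h2⟩
    omega

lemma arcs_eq_image_partner :
    arcs n A = {v ∈ Icc 1 n | 0 < partner n A v}.image (fun v => (partner n A v, v)) := by
  ext ⟨u, v⟩
  simp only [mem_arcs_iff_partner, mem_image, mem_filter, Prod.mk.injEq]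
  constructor
  · rintro ⟨hu, rfl⟩
    exact ⟨v, ⟨(partner_lt_and_sameBlock hu).2.mem_Icc.2, hu⟩, rfl, rfl⟩
  · rintro ⟨v, ⟨-, hv⟩, rfl, rfl⟩
    exact ⟨hv, rfl⟩

lemma injOn_snd_arcs : Set.InjOn Prod.snd (arcs n A : Set (ℕ × ℕ)) := by
  intro p hp q hq h
  rw [mem_coe, mem_arcs_iff_partner] at hp hq
  exact Prod.ext (hp.2.symm.trans (h ▸ hq.2)) h

lemma arcs_right_unique {i j j' : ℕ} (h : (i, j) ∈ arcs n A) (h' : (i, j') ∈ arcs n A) :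
    j = j' := by
  rw [mem_arcs_iff_partner] at h h'
  dsimp only at h h'
  by_contra hne
  wlog hlt : j < j' generalizing j j'
  · exact this h' h (Ne.symm hne) (by omega)
  obtain ⟨-, B, hB, hiB, hj'B⟩ := partner_lt_and_sameBlock (h'.2 ▸ h'.1)
  obtain ⟨hij, C, hC, hiC, hjC⟩ := partner_lt_and_sameBlock (h.2 ▸ h.1)
  rw [h.2] at hiC
  rw [h'.2] at hiB
  rw [A.eq_of_mem_parts hC hB hiC hiB] at hjC
  have := le_partner (sameBlock.mem_Icc ⟨B, hB, hjC, hj'B⟩).1 hlt ⟨B, hB, hjC, hj'B⟩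
  omega

lemma exists_mem_arcs_le {i j : ℕ} (hsb : sameBlock n A i j) (hij : i < j) :
    ∃ j₀ ≤ j, (i, j₀) ∈ arcs n A := by
  obtain ⟨B, hB, hiB, hjB⟩ := hsb
  have hne : {k ∈ B | i < k}.Nonempty := ⟨j, mem_filter.2 ⟨hjB, hij⟩⟩
  set j₀ := {k ∈ B | i < k}.min' hne
  obtain ⟨hj₀B, hij₀⟩ := mem_filter.1 ({k ∈ B | i < k}.min'_mem hne)
  refine ⟨j₀, min'_le _ _ (mem_filter.2 ⟨hjB, hij⟩), mem_filter.2 ⟨?_, hij₀, B, hB, hiB, hj₀B, ?_⟩⟩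
  · exact mem_product.2 ⟨A.le hB hiB, A.le hB hj₀B⟩
  · rintro k hk ⟨hik, hkj₀⟩
    exact (min'_le _ k (mem_filter.2 ⟨hk, hik⟩)).not_gt hkj₀

lemma card_arcs_nested_in_partner {v : ℕ} :
    #{p ∈ arcs n A | partner n A v < p.1 ∧ p.2 < v}
      = #{i ∈ Ioo (partner n A v) v | ¬∀ j, sameBlock n A i j → i < j → v < j} := by
  refine card_bij (fun p _ => p.1) ?_ ?_ ?_
  · intro p hp
    obtain ⟨hp, hup, hpv⟩ := mem_filter.1 hp
    obtain ⟨hlt, hsb⟩ := lt_and_sameBlock_of_mem_arcs hp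
    simp only [mem_filter, mem_Ioo, not_forall, not_lt]
    exact ⟨⟨hup, by omega⟩, p.2, hsb, hlt, hpv.le⟩
  · intro p hp q hq (h : p.1 = q.1)
    have hq' : (p.1, q.2) ∈ arcs n A := h ▸ (mem_filter.1 hq).1
    exact Prod.ext h (arcs_right_unique (mem_filter.1 hp).1 hq')
  · intro i hi
    simp only [mem_filter, mem_Ioo, not_forall, not_lt] at hi
    obtain ⟨⟨hui, hiv⟩, j, hsb, hij, hjv⟩ := hi
    obtain ⟨j₀, hj₀j, harc⟩ := exists_mem_arcs_le hsb hij
    have hj₀v : j₀ ≠ v := by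
      rintro rfl
      rw [(mem_arcs_iff_partner.1 harc).2] at hui
      exact lt_irrefl _ hui
    exact ⟨(i, j₀), mem_filter.2 ⟨harc, hui, by omega⟩, rfl⟩

lemma partialDepthIndex_add_partialInumber {v : ℕ} (hv : v ∈ Icc 1 n) :
    partialDepthIndex n A v + partialInumber n A v = v - 1 := by
  obtain ⟨hv1, hvn⟩ := mem_Icc.1 hv
  have hInumber : partialInumber n A v
      = #{i ∈ Ioo (partner n A v) v | ∀ j, sameBlock n A i j → i < j → v < j} := by
    rw [partialInumber]
    congr 1
    ext i
    simp only [mem_filter, mem_Icc, mem_Ioo]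
    exact ⟨fun ⟨_, hui, hiv, h⟩ => ⟨⟨hui, hiv⟩, h⟩,
      fun ⟨⟨hui, hiv⟩, h⟩ => ⟨⟨by omega, by omega⟩, hui, hiv, h⟩⟩
  have hsplit := card_filter_add_card_filter_not (s := Ioo (partner n A v) v)
    (fun i => ∀ j, sameBlock n A i j → i < j → v < j)
  rw [Nat.card_Ioo] at hsplit
  rw [partialDepthIndex, card_arcs_nested_in_partner, hInumber]
  have := partner_lt (A := A) hv1
  omega

lemma intertwined_iff {x v : ℕ} (hx : x ∈ Icc 1 n) (hv : v ∈ Icc 1 n) :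
    (x < v ∧ ∃ B ∈ A.parts, ∃ C ∈ A.parts, B ≠ C ∧ x ∈ B ∧ v ∈ C ∧
        ∀ k ∈ B ∪ C, ¬(x < k ∧ k < v)) ↔
      partner n A v < x ∧ x < v ∧ ∀ j, sameBlock n A x j → x < j → v < j := by
  constructor
  · rintro ⟨hxv, B, hB, C, hC, hBC, hxB, hvC, hgap⟩
    refine ⟨?_, hxv, ?_⟩
    · by_contra! hle
      have hpos : 0 < partner n A v := by have := (mem_Icc.1 hx).1; omega
      obtain ⟨hlt, D, hD, huD, hvD⟩ := partner_lt_and_sameBlock hpos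
      rw [A.eq_of_mem_parts hD hC hvD hvC] at huD
      rcases hle.lt_or_eq with hlt' | heq
      · exact hgap _ (mem_union_right _ huD) ⟨hlt', hlt⟩
      · exact hBC (A.eq_of_mem_parts hB hC hxB (heq ▸ huD))
    · rintro j ⟨D, hD, hxD, hjD⟩ hxj
      rw [A.eq_of_mem_parts hD hB hxD hxB] at hjD
      have hjv : j ≠ v := fun h => hBC (A.eq_of_mem_parts hB hC hjD (h ▸ hvC))
      have := hgap j (mem_union_left _ hjD)
      omega
  · rintro ⟨hux, hxv, hsucc⟩
    obtain ⟨B, hB, hxB⟩ := A.exists_mem hx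
    obtain ⟨C, hC, hvC⟩ := A.exists_mem hv
    have hBC : B ≠ C := by
      rintro rfl
      exact lt_irrefl v (hsucc v ⟨B, hB, hxB, hvC⟩ hxv)
    refine ⟨hxv, B, hB, C, hC, hBC, hxB, hvC, fun k hk ⟨hxk, hkv⟩ => ?_⟩
    rcases mem_union.1 hk with hkB | hkC
    · exact lt_asymm hkv (hsucc k ⟨B, hB, hxB, hkB⟩ hxk)
    · have := le_partner (A.le hC hkC) hkv ⟨C, hC, hkC, hvC⟩
      omega

lemma inumber_eq_sum_partialInumber :
    inumber n A = ∑ v ∈ Icc 1 n, partialInumber n A v := by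
  rw [inumber, card_filter, sum_product_right]
  refine sum_congr rfl fun v hv => ?_
  rw [← card_filter, partialInumber]
  exact congrArg card (filter_congr fun x hx => intertwined_iff hx hv)

lemma sum_partner_eq_sum_arcs_fst :
    ∑ v ∈ Icc 1 n, partner n A v = ∑ p ∈ arcs n A, p.1 := by
  rw [arcs_eq_image_partner, sum_image fun _ _ _ _ h => congrArg Prod.snd h]
  exact (sum_filter_of_ne fun _ _ h => Nat.pos_of_ne_zero h).symm

lemma sum_partialDepthIndex :
    ∑ v ∈ Icc 1 n, partialDepthIndex n A v
      = ∑ p ∈ arcs n A, (p.1 + #{v ∈ Icc 1 n | partner n A v < p.1 ∧ p.2 < v}) := by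
  simp only [partialDepthIndex, sum_add_distrib, sum_partner_eq_sum_arcs_fst]
  congr 1
  exact sum_card_bipartiteAbove_eq_sum_card_bipartiteBelow
    (fun (v : ℕ) (p : ℕ × ℕ) => partner n A v < p.1 ∧ p.2 < v)

lemma sum_vertexDepth :
    ∑ v ∈ Icc 1 n, vertexDepth n A v = ∑ p ∈ arcs n A, (p.2 - p.1 - 1) := calc
  _ = ∑ p ∈ arcs n A, #{v ∈ Icc 1 n | p.1 < v ∧ v < p.2} :=
    sum_card_bipartiteAbove_eq_sum_card_bipartiteBelow
      (fun (v : ℕ) (p : ℕ × ℕ) => p.1 < v ∧ v < p.2)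
  _ = _ := by
    refine sum_congr rfl fun p hp => ?_
    obtain ⟨h1, h2⟩ := (lt_and_sameBlock_of_mem_arcs hp).2.mem_Icc
    rw [mem_Icc] at h1 h2
    rw [← Nat.card_Ioo]
    congr 1
    ext v
    simp only [mem_filter, mem_Icc, mem_Ioo]
    omega

lemma card_filter_partner_lt_add_card_filter_lt {p : ℕ × ℕ} (hp : p ∈ arcs n A) :
    #{v ∈ Icc 1 n | partner n A v < p.1 ∧ p.2 < v} + #{q ∈ arcs n A | p.2 < q.2} + p.2
      = n + arcDepth n A p := by
  have hp1 : 0 < p.1 := (mem_arcs_iff_partner.1 hp).1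
  have hpn : p.2 ≤ n := (mem_Icc.1 (lt_and_sameBlock_of_mem_arcs hp).2.mem_Icc.2).2
  have hnested : #{q ∈ arcs n A | ¬q.1 < p.1 ∧ p.2 < q.2}
      = #{v ∈ Icc 1 n | ¬partner n A v < p.1 ∧ p.2 < v} := by
    rw [arcs_eq_image_partner, filter_image,
      card_image_of_injective _ fun _ _ h => congrArg Prod.snd h, filter_filter]
    congr 1
    refine filter_congr fun v _ => ?_
    dsimp only
    omega
  have hright : #{v ∈ Icc 1 n | p.2 < v} = n - p.2 := by
    rw [← Nat.card_Ioc]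
    congr 1
    ext v
    simp only [mem_filter, mem_Icc, mem_Ioc]
    omega
  have hsplitv := card_filter_and_add_card_filter_not_and (Icc 1 n)
    (fun v => partner n A v < p.1) (fun v => p.2 < v)
  have hsplitq := card_filter_and_add_card_filter_not_and (arcs n A)
    (fun q : ℕ × ℕ => q.1 < p.1) (fun q => p.2 < q.2)
  rw [arcDepth]
  omega

lemma depthIndex_eq_sum_partialDepthIndex :
    depthIndex n A = ∑ v ∈ Icc 1 n, (partialDepthIndex n A v : ℤ) := by
  have hrank : ∑ k ∈ Icc 1 #(arcs n A), ((n : ℤ) - k)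
      = ∑ p ∈ arcs n A, ((n : ℤ) - (#{q ∈ arcs n A | p.2 < q.2} + 1)) := by
    rw [← Ico_add_one_right_eq_Icc, sum_Ico_eq_sum_range, add_tsub_cancel_right,
      sum_range_card_eq_sum_card_filter_lt injOn_snd_arcs (fun k => (n : ℤ) - (1 + k : ℕ))]
    simp only [Nat.cast_add, Nat.cast_one, add_comm]
  rw [depthIndex, hrank, ← Nat.cast_sum, sum_vertexDepth, ← Nat.cast_sum (s := Icc 1 n),
    sum_partialDepthIndex]
  push_cast
  rw [← sum_sub_distrib, ← sum_add_distrib]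
  refine sum_congr rfl fun p hp => ?_
  have hlt := (lt_and_sameBlock_of_mem_arcs hp).1
  have := card_filter_partner_lt_add_card_filter_lt hp
  omega

end

theorem depthIndex_add_inumber_general (n : ℕ) (A : Finpartition (Finset.Icc 1 n)) :
    depthIndex n A + (inumber n A : ℤ) = ((n * (n - 1) / 2 : ℕ) : ℤ) := by
  have hgauss : ∑ v ∈ Icc 1 n, (v - 1) = n * (n - 1) / 2 := by
    rw [← Ico_add_one_right_eq_Icc, sum_Ico_eq_sum_range, add_tsub_cancel_right, ← sum_range_id]
    simp only [add_tsub_cancel_left]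
  rw [depthIndex_eq_sum_partialDepthIndex, inumber_eq_sum_partialInumber, ← hgauss,
    Nat.cast_sum, Nat.cast_sum, ← sum_add_distrib]
  refine sum_congr rfl fun v hv => ?_
  rw [← partialDepthIndex_add_partialInumber hv, Nat.cast_add]

/-- For `n ≥ 1` and a set partition `A` of `{1,…,n}`, the depth index and
the intertwining number satisfy `t(A) + i(A) = n(n−1)/2`. -/
theorem depthIndex_add_inumber (n : ℕ) (hn : 1 ≤ n) (A : Finpartition (Finset.Icc 1 n)) :
    depthIndex n A + (inumber n A : ℤ) = ((n * (n - 1) / 2 : ℕ) : ℤ) :=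
  depthIndex_add_inumber_general n A
end

section
/- Let n ≥ 1, let A be a set partition of {1,…,n}, and let (r_{i,j}) be the rank-control matrix of the adjacency matrix M(A). Then for all i, j ∈ {1,…,n}, the entry r_{i,j} equals the number of arcs (k,l) of A with i ≤ k < l ≤ j. -/
open Finset
open scoped Classical

/-!
An element has at most one successor and at most one predecessor in its block, so every row and
every column of `M(A)`, and of each of its submatrices, has at most one nonzero entry. In such a
matrix the nonzero columns are nonzero multiples of pairwise distinct standard basis vectors, so
the rank is the number of nonzero entries. In the submatrix with rows `≥ i` and columns `≤ j`
these entries are exactly the arcs `(k, l)` with `i ≤ k` and `l ≤ j`.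
-/

namespace Matrix

variable {m n K : Type*} [Field K] {M : Matrix m n K}

lemma col_eq_single_of_ne_zero (hcol : ∀ c r r', M r c ≠ 0 → M r' c ≠ 0 → r = r')
    {r : m} {c : n} (hrc : M r c ≠ 0) : M.col c = M r c • Pi.single r 1 := by
  ext r'
  by_cases hr' : r' = r
  · subst hr'; simp
  · have : M r' c = 0 := by_contra fun h => hr' (hcol c r' r h hrc)
    simp [this, hr']

theorem rank_eq_card_nonzero_rows [Fintype m] [Fintype n] [DecidableEq K]
    (hcol : ∀ c r r', M r c ≠ 0 → M r' c ≠ 0 → r = r') :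
    M.rank = #{r | ∃ c, M r c ≠ 0} := by
  set T : Finset m := {r | ∃ c, M r c ≠ 0}
  have hspan : Submodule.span K (Set.range M.col)
      = Submodule.span K (Set.range fun r : T => (Pi.single (r : m) 1 : m → K)) := by
    apply le_antisymm <;> rw [Submodule.span_le]
    · rintro _ ⟨c, rfl⟩
      by_cases hc : ∃ r, M r c ≠ 0
      · obtain ⟨r, hrc⟩ := hc
        rw [col_eq_single_of_ne_zero hcol hrc]
        exact Submodule.smul_mem _ _ (Submodule.subset_span ⟨⟨r, by simpa [T] using ⟨c, hrc⟩⟩, rfl⟩)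
      · have : M.col c = 0 := funext fun r => not_not.mp fun h => hc ⟨r, h⟩
        rw [this]; exact Submodule.zero_mem _
    · rintro _ ⟨⟨r, hr⟩, rfl⟩
      obtain ⟨c, hrc⟩ := by simpa [T] using hr
      have : Pi.single r 1 = (M r c)⁻¹ • M.col c := by
        rw [col_eq_single_of_ne_zero hcol hrc, smul_smul, inv_mul_cancel₀ hrc, one_smul]
      simp only [this]
      exact Submodule.smul_mem _ _ (Submodule.subset_span ⟨c, rfl⟩)
  have hli : LinearIndependent K fun r : T => (Pi.single (r : m) 1 : m → K) :=
    (Pi.basisFun K m).linearIndependent.comp _ Subtype.val_injective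
  rw [rank_eq_finrank_span_cols, hspan, finrank_span_eq_card hli, Fintype.card_coe]

theorem rank_eq_card_support [Fintype m] [Fintype n] [DecidableEq K]
    (hrow : ∀ r c c', M r c ≠ 0 → M r c' ≠ 0 → c = c')
    (hcol : ∀ c r r', M r c ≠ 0 → M r' c ≠ 0 → r = r') :
    M.rank = #{rc : m × n | M rc.1 rc.2 ≠ 0} := by
  have hinj : Set.InjOn Prod.fst
      (({rc : m × n | M rc.1 rc.2 ≠ 0} : Finset (m × n)) : Set (m × n)) := by
    rintro ⟨r, c⟩ hrc ⟨r', c'⟩ hrc' (rfl : r = r')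
    simp only [coe_filter, mem_univ, true_and, Set.mem_ofPred_eq] at hrc hrc'
    rw [hrow r c c' hrc hrc']
  rw [rank_eq_card_nonzero_rows hcol, ← card_image_of_injOn hinj]
  congr 1
  ext r
  simp

end Matrix

lemma snd_eq_of_mem_arcs {n : ℕ} {A : Finpartition (Finset.Icc 1 n)} {a b b' : ℕ}
    (h : (a, b) ∈ arcs n A) (h' : (a, b') ∈ arcs n A) : b = b' := by
  simp only [arcs, mem_filter] at h h'
  obtain ⟨-, hab, B, hB, haB, hbB, hB_gap⟩ := h
  obtain ⟨-, hab', B', hB', haB', hbB', hB'_gap⟩ := h'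
  obtain rfl : B = B' := A.eq_of_mem_parts hB hB' haB haB'
  by_contra hne
  rcases Nat.lt_or_gt_of_ne hne with hlt | hgt
  · exact hB'_gap b hbB ⟨hab, hlt⟩
  · exact hB_gap b' hbB' ⟨hab', hgt⟩

lemma fst_eq_of_mem_arcs {n : ℕ} {A : Finpartition (Finset.Icc 1 n)} {a a' b : ℕ}
    (h : (a, b) ∈ arcs n A) (h' : (a', b) ∈ arcs n A) : a = a' := by
  simp only [arcs, mem_filter] at h h'
  obtain ⟨-, hab, B, hB, haB, hbB, hB_gap⟩ := h
  obtain ⟨-, hab', B', hB', haB', hbB', hB'_gap⟩ := h'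
  obtain rfl : B = B' := A.eq_of_mem_parts hB hB' hbB hbB'
  by_contra hne
  rcases Nat.lt_or_gt_of_ne hne with hlt | hgt
  · exact hB_gap a' haB' ⟨hlt, hab'⟩
  · exact hB'_gap a haB ⟨hgt, hab⟩

lemma adjMatrix_ne_zero_iff {n : ℕ} {A : Finpartition (Finset.Icc 1 n)} {r c : Fin n} :
    adjMatrix n A r c ≠ 0 ↔ ((r : ℕ) + 1, (c : ℕ) + 1) ∈ arcs n A := by
  simp [adjMatrix]

lemma card_nonzero_submatrix_adjMatrix (n : ℕ) (A : Finpartition (Finset.Icc 1 n)) (i j : ℕ) :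
    #{rc : {k : Fin n // i ≤ (k : ℕ) + 1} × {l : Fin n // (l : ℕ) + 1 ≤ j} |
        adjMatrix n A rc.1 rc.2 ≠ 0}
      = #{p ∈ arcs n A | i ≤ p.1 ∧ p.2 ≤ j} := by
  refine card_nbij (fun rc => ((rc.1 : Fin n) + 1, (rc.2 : Fin n) + 1)) ?_ ?_ ?_
  · rintro ⟨r, c⟩ hrc
    simp only [coe_filter, mem_univ, true_and, Set.mem_ofPred_eq, adjMatrix_ne_zero_iff] at hrc
    exact mem_filter.mpr ⟨hrc, r.2, c.2⟩
  · rintro ⟨r, c⟩ - ⟨r', c'⟩ - h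
    simp only [Prod.mk.injEq, add_left_inj] at h
    simp [Subtype.ext_iff, Fin.ext_iff, h]
  · rintro ⟨a, b⟩ hab
    simp only [coe_filter, Set.mem_ofPred_eq] at hab
    obtain ⟨hab, hia, hbj⟩ := hab
    have hbounds : (a, b) ∈ Icc 1 n ×ˢ Icc 1 n := (mem_filter.mp hab).1
    simp only [mem_product, mem_Icc] at hbounds
    refine ⟨(⟨⟨a - 1, by omega⟩, by dsimp only; omega⟩, ⟨⟨b - 1, by omega⟩, by dsimp only; omega⟩),
      ?_, ?_⟩
    · simp only [coe_filter, mem_univ, true_and, Set.mem_ofPred_eq, adjMatrix_ne_zero_iff]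
      convert hab using 3 <;> omega
    · simp only [Prod.mk.injEq]; omega

theorem rankControl_eq_card_arcs_general (n : ℕ) (A : Finpartition (Finset.Icc 1 n))
    (i j : ℕ) :
    rankControl n (adjMatrix n A) i j
      = ((arcs n A).filter (fun p => i ≤ p.1 ∧ p.2 ≤ j)).card := by
  rw [rankControl, Matrix.rank_eq_card_support]
  · exact card_nonzero_submatrix_adjMatrix n A i j
  · intro r c c' hc hc'
    rw [Matrix.submatrix_apply, adjMatrix_ne_zero_iff] at hc hc'
    have := snd_eq_of_mem_arcs hc hc'
    ext; omega
  · intro c r r' hr hr'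
    rw [Matrix.submatrix_apply, adjMatrix_ne_zero_iff] at hr hr'
    have := fst_eq_of_mem_arcs hr hr'
    ext; omega

/-- For `n ≥ 1`, a set partition `A` of `{1,…,n}` and `i, j ∈ {1,…,n}`,
the entry `r_{i,j}` of the rank-control matrix of the adjacency matrix `M(A)` equals the
number of arcs `(k,l)` of `A` with `i ≤ k < l ≤ j`. -/
theorem rankControl_eq_card_arcs (n : ℕ) (hn : 1 ≤ n) (A : Finpartition (Finset.Icc 1 n))
    (i j : ℕ) (hi : i ∈ Finset.Icc 1 n) (hj : j ∈ Finset.Icc 1 n) :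
    rankControl n (adjMatrix n A) i j
      = ((arcs n A).filter (fun p => i ≤ p.1 ∧ p.2 ≤ j)).card :=
  rankControl_eq_card_arcs_general n A i j
end

section
/- Let n ≥ 1 and let A be a set partition of {1,…,n}. Then D(A) + E(A) = n(n−1)/2, where D(A) = #{(i,j) : 2 ≤ i ≤ n, 1 ≤ j ≤ n−1, r_{i,j} ≠ r_{i−1,j+1}} and E(A) = #{(i,j) : 2 ≤ i ≤ j+1 ≤ n and r_{i,j} = r_{i−1,j+1}}. -/
open Finset
open scoped Classical

/-!
The adjacency matrix of a set partition is strictly upper triangular, so `r_{i,j} = 0` whenever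
`j ≤ i`. Hence for `i ≥ j + 2` both `r_{i,j}` and `r_{i-1,j+1}` vanish: `D(A)` only counts pairs
with `i ≤ j + 1`, and together `D(A)` and `E(A)` count each pair `2 ≤ i ≤ j + 1 ≤ n` exactly
once. For fixed `j` there are `j` such pairs, and `∑_{j=1}^{n-1} j = n(n-1)/2`.
-/

lemma rankControl_eq_zero_of_le {n : ℕ} {M : Matrix (Fin n) (Fin n) ℚ}
    (hM : ∀ k l : Fin n, l ≤ k → M k l = 0) {i j : ℕ} (hji : j ≤ i) :
    rankControl n M i j = 0 := by
  have hzero : M.submatrix (fun k : {k : Fin n // i ≤ (k : ℕ) + 1} => (k : Fin n))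
      (fun l : {l : Fin n // (l : ℕ) + 1 ≤ j} => (l : Fin n)) = 0 := by
    ext ⟨k, hk⟩ ⟨l, hl⟩
    exact hM k l (by rw [Fin.le_iff_val_le_val]; omega)
  rw [rankControl, hzero, Matrix.rank_zero]

lemma adjMatrix_eq_zero_of_le (n : ℕ) (A : Finpartition (Icc 1 n)) {k l : Fin n} (hlk : l ≤ k) :
    adjMatrix n A k l = 0 := by
  have hlt : ¬ ((k : ℕ) + 1 < (l : ℕ) + 1) := by rw [Fin.le_iff_val_le_val] at hlk; omega
  simp only [adjMatrix, arcs, mem_filter, hlt, false_and, and_false, if_false]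

lemma sum_Icc_one_id (n : ℕ) : ∑ j ∈ Icc 1 (n - 1), j = n * (n - 1) / 2 := by
  rw [← sum_range_id]
  refine sum_subset (fun j hj => ?_) (fun j hj hj' => ?_)
  · simp only [mem_Icc, mem_range] at hj ⊢; omega
  · simp only [mem_Icc, mem_range, not_and, not_le] at hj hj'; omega

lemma card_filter_le_succ (n : ℕ) :
    ((Icc 2 n ×ˢ Icc 1 (n - 1)).filter (fun p => p.1 ≤ p.2 + 1)).card = n * (n - 1) / 2 := by
  rw [card_filter, sum_product_right, ← sum_Icc_one_id]
  refine sum_congr rfl fun j hj => ?_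
  have hfiber : (Icc 2 n).filter (· ≤ j + 1) = Icc 2 (j + 1) := by
    ext i; simp only [mem_filter, mem_Icc] at hj ⊢; omega
  rw [← card_filter, hfiber, Nat.card_Icc]
  omega

lemma card_filter_ne_add_card_filter_eq (n : ℕ) (r : ℕ → ℕ → ℕ)
    (hr : ∀ i j, j + 2 ≤ i → r i j = r (i - 1) (j + 1)) :
    ((Icc 2 n ×ˢ Icc 1 (n - 1)).filter (fun p => r p.1 p.2 ≠ r (p.1 - 1) (p.2 + 1))).card +
      ((Icc 2 n ×ˢ Icc 1 n).filter (fun p => p.1 ≤ p.2 + 1 ∧ p.2 + 1 ≤ n ∧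
          r p.1 p.2 = r (p.1 - 1) (p.2 + 1))).card
      = n * (n - 1) / 2 := by
  set T := (Icc 2 n ×ˢ Icc 1 (n - 1)).filter (fun p => p.1 ≤ p.2 + 1)
  have hD : (Icc 2 n ×ˢ Icc 1 (n - 1)).filter (fun p => r p.1 p.2 ≠ r (p.1 - 1) (p.2 + 1)) =
      T.filter (fun p => r p.1 p.2 ≠ r (p.1 - 1) (p.2 + 1)) := by
    ext ⟨i, j⟩
    simp only [T, mem_filter]
    refine ⟨fun ⟨hij, hne⟩ => ⟨⟨hij, ?_⟩, hne⟩, fun ⟨⟨hij, _⟩, hne⟩ => ⟨hij, hne⟩⟩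
    by_contra hlt
    exact hne (hr i j (by omega))
  have hE : (Icc 2 n ×ˢ Icc 1 n).filter (fun p => p.1 ≤ p.2 + 1 ∧ p.2 + 1 ≤ n ∧
        r p.1 p.2 = r (p.1 - 1) (p.2 + 1)) =
      T.filter (fun p => r p.1 p.2 = r (p.1 - 1) (p.2 + 1)) := by
    ext ⟨i, j⟩
    simp only [T, mem_filter, mem_product, mem_Icc]
    omega
  rw [hD, hE, add_comm, card_filter_add_card_filter_not, card_filter_le_succ]

theorem D_add_E_general (n : ℕ) (A : Finpartition (Finset.Icc 1 n)) :
    (((Finset.Icc 2 n ×ˢ Finset.Icc 1 (n - 1))).filter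
        (fun p => rankControl n (adjMatrix n A) p.1 p.2 ≠
          rankControl n (adjMatrix n A) (p.1 - 1) (p.2 + 1))).card +
      ((Finset.Icc 2 n ×ˢ Finset.Icc 1 n).filter
        (fun p => p.1 ≤ p.2 + 1 ∧ p.2 + 1 ≤ n ∧
          rankControl n (adjMatrix n A) p.1 p.2 =
            rankControl n (adjMatrix n A) (p.1 - 1) (p.2 + 1))).card
      = n * (n - 1) / 2 := by
  refine card_filter_ne_add_card_filter_eq n (rankControl n (adjMatrix n A)) fun i j hij => ?_
  have hupper : ∀ k l : Fin n, l ≤ k → adjMatrix n A k l = 0 :=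
    fun _ _ => adjMatrix_eq_zero_of_le n A
  rw [rankControl_eq_zero_of_le hupper (by omega), rankControl_eq_zero_of_le hupper (by omega)]

/-- For `n ≥ 1` and a set partition `A` of `{1,…,n}`,
`D(A) + E(A) = n(n−1)/2`, where `D(A)` counts pairs `(i,j)` with `2 ≤ i ≤ n`,
`1 ≤ j ≤ n−1` and `r_{i,j} ≠ r_{i−1,j+1}`, and `E(A)` counts pairs `(i,j)` with
`2 ≤ i ≤ j+1 ≤ n` and `r_{i,j} = r_{i−1,j+1}`. -/
theorem D_add_E (n : ℕ) (hn : 1 ≤ n) (A : Finpartition (Finset.Icc 1 n)) :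
    (((Finset.Icc 2 n ×ˢ Finset.Icc 1 (n - 1))).filter
        (fun p => rankControl n (adjMatrix n A) p.1 p.2 ≠
          rankControl n (adjMatrix n A) (p.1 - 1) (p.2 + 1))).card +
      ((Finset.Icc 2 n ×ˢ Finset.Icc 1 n).filter
        (fun p => p.1 ≤ p.2 + 1 ∧ p.2 + 1 ≤ n ∧
          rankControl n (adjMatrix n A) p.1 p.2 =
            rankControl n (adjMatrix n A) (p.1 - 1) (p.2 + 1))).card
      = n * (n - 1) / 2 :=
  D_add_E_general n A
end

section
/- Let F be a field, n ≥ 1, let X be an n×n matrix over F, let B and C be invertible upper-triangular n×n matrices over F, and set Y = B·X·C. Then for all k, ℓ with 1 ≤ k, ℓ ≤ n, the rank of the lower-left k×ℓ submatrix of X equals the rank of the lower-left k×ℓ submatrix of Y, where the lower-left k×ℓ submatrix of an n×n matrix consists of its last k rows and first ℓ columns. -/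
/-!
The last `k` rows form an upper set `P` and the first `ℓ` columns a lower set `Q` of indices.
An upper triangular `B` vanishes on `P × Pᶜ` and an upper triangular `C` on `Qᶜ × Q`, so the
lower-left block of `B * X * C` is `B[P,P] * X[P,Q] * C[Q,Q]`. The same vanishing makes `B` and
`C` block triangular, so `det B[P,P]` divides `det B` and `det C[Q,Q]` divides `det C`; multiplying
by these invertible blocks does not change the rank.
-/

open Finset
open scoped Classical

noncomputable section

/-- The rank of the lower-left `k × ℓ` submatrix of an `n × n` matrix `M`: the submatrix
consisting of rows `n−k+1, …, n` and columns `1, …, ℓ` (in 1-based indexing). -/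
noncomputable def lowerLeftRank {F : Type*} [Field F] (n : ℕ)
    (M : Matrix (Fin n) (Fin n) F) (k l : ℕ) : ℕ :=
  (M.submatrix (fun r : {r : Fin n // n - k + 1 ≤ (r : ℕ) + 1} => (r : Fin n))
               (fun c : {c : Fin n // (c : ℕ) + 1 ≤ l} => (c : Fin n))).rank

end

namespace Matrix

variable {ι κ R : Type*} [Fintype ι] [CommRing R]

lemma toBlock_mul_of_apply_eq_zero_left (B : Matrix ι ι R) (X : Matrix ι κ R)
    (p : ι → Prop) [DecidablePred p] (q : κ → Prop) (h : ∀ i, p i → ∀ j, ¬p j → B i j = 0) :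
    (B * X).toBlock p q = B.toBlock p p * X.toBlock p q := by
  have hzero : B.toBlock p (fun j => ¬p j) = 0 := by
    ext i j
    exact h i i.2 j j.2
  rw [toBlock_mul_eq_add p p q, hzero, Matrix.zero_mul, add_zero]

lemma toBlock_mul_of_apply_eq_zero_right (X : Matrix κ ι R) (C : Matrix ι ι R)
    (p : κ → Prop) (q : ι → Prop) [DecidablePred q] (h : ∀ i, ¬q i → ∀ j, q j → C i j = 0) :
    (X * C).toBlock p q = X.toBlock p q * C.toBlock q q := by
  have hzero : C.toBlock (fun i => ¬q i) q = 0 := by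
    ext i j
    exact h i i.2 j j.2
  rw [toBlock_mul_eq_add p q q, hzero, Matrix.mul_zero, add_zero]

variable [DecidableEq ι]

lemma isUnit_det_toBlock_of_apply_eq_zero_left {M : Matrix ι ι R} (hM : IsUnit M.det)
    (p : ι → Prop) [DecidablePred p] (h : ∀ i, p i → ∀ j, ¬p j → M i j = 0) :
    IsUnit (M.toBlock p p).det := by
  rw [twoBlockTriangular_det' M p h] at hM
  exact isUnit_of_mul_isUnit_left hM

lemma isUnit_det_toBlock_of_apply_eq_zero_right {M : Matrix ι ι R} (hM : IsUnit M.det)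
    (q : ι → Prop) [DecidablePred q] (h : ∀ i, ¬q i → ∀ j, q j → M i j = 0) :
    IsUnit (M.toBlock q q).det := by
  rw [twoBlockTriangular_det M q h] at hM
  exact isUnit_of_mul_isUnit_left hM

lemma rank_toBlock_mul_mul [Fintype κ] [DecidableEq κ] {B : Matrix ι ι R} {X : Matrix ι κ R}
    {C : Matrix κ κ R} (hB : IsUnit B.det) (hC : IsUnit C.det)
    (p : ι → Prop) (q : κ → Prop) [DecidablePred p] [DecidablePred q]
    (hBp : ∀ i, p i → ∀ j, ¬p j → B i j = 0) (hCq : ∀ i, ¬q i → ∀ j, q j → C i j = 0) :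
    ((B * X * C).toBlock p q).rank = (X.toBlock p q).rank := by
  rw [toBlock_mul_of_apply_eq_zero_right _ C p q hCq, toBlock_mul_of_apply_eq_zero_left B X p q hBp,
    rank_mul_eq_left_of_isUnit_det _ _ (isUnit_det_toBlock_of_apply_eq_zero_right hC q hCq),
    rank_mul_eq_right_of_isUnit_det _ _ (isUnit_det_toBlock_of_apply_eq_zero_left hB p hBp)]

end Matrix

namespace Matrix.IsUpperTriangular

variable {ι R : Type*} [LinearOrder ι] [Zero R] {M : Matrix ι ι R}

lemma apply_eq_zero_of_isUpperSet (hM : M.IsUpperTriangular) {p : ι → Prop}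
    (hp : IsUpperSet {i | p i}) : ∀ i, p i → ∀ j, ¬p j → M i j = 0 :=
  fun _ hi _ hj => hM (lt_of_not_ge fun hij => hj (hp hij hi))

lemma apply_eq_zero_of_isLowerSet (hM : M.IsUpperTriangular) {q : ι → Prop}
    (hq : IsLowerSet {j | q j}) : ∀ i, ¬q i → ∀ j, q j → M i j = 0 :=
  fun _ hi _ hj => hM (lt_of_not_ge fun hij => hi (hq hij hj))

end Matrix.IsUpperTriangular

theorem lowerLeftRank_invariant_general {F : Type*} [Field F] (n : ℕ)
    (X B C Y : Matrix (Fin n) (Fin n) F)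
    (hB : IsUnit B) (hBtri : ∀ i j : Fin n, j < i → B i j = 0)
    (hC : IsUnit C) (hCtri : ∀ i j : Fin n, j < i → C i j = 0)
    (hY : Y = B * X * C)
    (k l : ℕ) :
    lowerLeftRank n X k l = lowerLeftRank n Y k l := by
  have hBup : B.IsUpperTriangular := fun _ _ => hBtri _ _
  have hCup : C.IsUpperTriangular := fun _ _ => hCtri _ _
  have hrows : IsUpperSet {r : Fin n | n - k + 1 ≤ (r : ℕ) + 1} :=
    fun r s hrs hr => le_trans hr (Nat.succ_le_succ (Fin.le_def.mp hrs))
  have hcols : IsLowerSet {c : Fin n | (c : ℕ) + 1 ≤ l} :=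
    fun r s hsr hr => le_trans (Nat.succ_le_succ (Fin.le_def.mp hsr)) hr
  subst hY
  exact (Matrix.rank_toBlock_mul_mul ((B.isUnit_iff_isUnit_det).mp hB)
    ((C.isUnit_iff_isUnit_det).mp hC) _ _ (hBup.apply_eq_zero_of_isUpperSet hrows)
    (hCup.apply_eq_zero_of_isLowerSet hcols)).symm

/-- Let `F` be a field, `n ≥ 1`, `X` an `n × n` matrix over `F`, and let
`B`, `C` be invertible upper-triangular `n × n` matrices over `F`.  Set `Y = B·X·C`.
Then for all `1 ≤ k, ℓ ≤ n`, the rank of the lower-left `k × ℓ` submatrix of `X` equals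
the rank of the lower-left `k × ℓ` submatrix of `Y`. -/
theorem lowerLeftRank_invariant {F : Type*} [Field F] (n : ℕ) (hn : 1 ≤ n)
    (X B C Y : Matrix (Fin n) (Fin n) F)
    (hB : IsUnit B) (hBtri : ∀ i j : Fin n, j < i → B i j = 0)
    (hC : IsUnit C) (hCtri : ∀ i j : Fin n, j < i → C i j = 0)
    (hY : Y = B * X * C)
    (k l : ℕ) (hk1 : 1 ≤ k) (hkn : k ≤ n) (hl1 : 1 ≤ l) (hln : l ≤ n) :
    lowerLeftRank n X k l = lowerLeftRank n Y k l :=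
  lowerLeftRank_invariant_general n X B C Y hB hBtri hC hCtri hY k l
end

section
/- Let n ≥ 1. Then Σ_{A ∈ Π_n} (−1)^{i(A)} equals (−1)^n if n ≡ 0 (mod 3), equals (−1)^{n+1} if n ≡ 1 (mod 3), and equals 0 if n ≡ 2 (mod 3). -/
open Finset
open scoped Classical

/-! Deleting the largest element `a` from a partition of `insert a s` leaves a partition `Q` of `s`
together with the (possibly empty) rest of the block of `a`, and this is a bijection. Putting `a`
back into a block `B` of `Q` creates exactly one new intertwined pair `(max C, a)` for every other
block `C` with `max C > max B`, so as `B` runs over the `k` blocks of `Q` the increments of the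
intertwining number are `0, 1, …, k - 1`, while a new singleton block `{a}` adds `k`. Hence
`T s = ∑ (-1) ^ i(P)` and `U s = ∑ (-1) ^ (i(P) + #P.parts)` satisfy `2 T (insert a s) = T s + U s`
and `2 U (insert a s) = U s - 3 T s`; the matrix of this recursion has order 6, and starting from
`T ∅ = U ∅ = 1` one gets `(-1) ^ #s` times a sequence of period 3 in `#s`. -/

theorem Finset.sum_card_filter_gt_eq_sum_range {α M : Type*} [LinearOrder α] [AddCommMonoid M]
    (s : Finset α) (f : ℕ → M) : ∑ m ∈ s, f #{m' ∈ s | m < m'} = ∑ j ∈ range #s, f j := by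
  induction s using Finset.induction_on_max generalizing f with
  | empty => simp
  | insert a s hlt ih =>
    have ha : a ∉ s := fun h => lt_irrefl a (hlt a h)
    rw [sum_insert ha, card_insert_of_notMem ha, sum_range_succ', add_comm, ← ih]
    congr 1
    · refine sum_congr rfl fun m hm => congrArg f ?_
      rw [filter_insert, if_pos (hlt m hm), card_insert_of_notMem fun h => ha (mem_filter.1 h).1]
    · rw [filter_eq_empty_iff.2 fun m hm => ?_, card_empty]
      rcases mem_insert.1 hm with rfl | hm
      · exact lt_irrefl m
      · exact (hlt m hm).not_gt

namespace Finpartition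

section Insertion

variable {α : Type*} [DecidableEq α] {s : Finset α} {a : α}

theorem parts_eq_image_part (P : Finpartition s) : P.parts = s.image P.part := by
  ext B
  constructor
  · intro hB
    obtain ⟨x, hx, rfl⟩ := P.part_surjOn hB
    exact mem_image_of_mem _ hx
  · rw [mem_image]
    rintro ⟨x, hx, rfl⟩
    exact P.part_mem.2 hx

theorem ext_part {P Q : Finpartition s} (h : ∀ x ∈ s, P.part x = Q.part x) : P = Q :=
  Finpartition.ext <| by rw [parts_eq_image_part, parts_eq_image_part, image_congr h]

theorem avoid_parts_of_mem_insert_empty (P : Finpartition s) {B : Finset α}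
    (hB : B ∈ insert ∅ P.parts) : (P.avoid B).parts = P.parts.erase B := by
  ext C
  rw [mem_avoid, mem_erase]
  rcases mem_insert.1 hB with rfl | hB
  · simp only [subset_empty, sdiff_empty, exists_eq_right_right]
    exact and_comm
  · constructor
    · rintro ⟨D, hD, hDB, rfl⟩
      have hne : D ≠ B := fun h => hDB (h ▸ le_rfl)
      have hdisj : Disjoint D B := P.disjoint hD hB hne
      rw [sdiff_eq_self_of_disjoint hdisj]
      exact ⟨hne, hD⟩
    · rintro ⟨hne, hC⟩
      have hdisj : Disjoint C B := P.disjoint hC hB hne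
      refine ⟨C, hC, fun hle => P.ne_bot hC (hdisj.eq_bot_of_le hle), ?_⟩
      exact sdiff_eq_self_of_disjoint hdisj

/-- Adds `a` to the part `B` of `P`, or as a new singleton part when `B = ∅`. -/
def insertIntoPart (P : Finpartition s) (ha : a ∉ s) (B : Finset α) :
    Finpartition (insert a s) :=
  (P.avoid B).extend (b := insert a (B ∩ s)) (insert_ne_empty _ _)
    (disjoint_left.2 fun x hx hx' => by
      rw [mem_sdiff] at hx
      rcases mem_insert.1 hx' with rfl | h
      · exact ha hx.1
      · exact hx.2 (mem_inter.1 h).1)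
    (by ext x; by_cases hxB : x ∈ B <;> simp [hxB])

def erasePoint (P : Finpartition (insert a s)) (ha : a ∉ s) : Finpartition s :=
  (P.avoid {a}).copy (by rw [sdiff_singleton_eq_erase, erase_insert ha])

section InsertErase

variable {x : α} {B : Finset α}

theorem subset_of_mem_insert_empty_parts (P : Finpartition s) (hB : B ∈ insert ∅ P.parts) :
    B ⊆ s := by
  rcases mem_insert.1 hB with rfl | hB
  · exact empty_subset s
  · exact P.le hB

variable (P : Finpartition s) (ha : a ∉ s)

theorem parts_insertIntoPart (hB : B ∈ insert ∅ P.parts) :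
    (P.insertIntoPart ha B).parts = insert (insert a B) (P.parts.erase B) := by
  rw [insertIntoPart, extend_parts, inter_eq_left.2 (P.subset_of_mem_insert_empty_parts hB),
    P.avoid_parts_of_mem_insert_empty hB]

theorem part_insertIntoPart_self (hB : B ∈ insert ∅ P.parts) :
    (P.insertIntoPart ha B).part a = insert a B :=
  part_eq_of_mem _ (by rw [P.parts_insertIntoPart ha hB]; exact mem_insert_self _ _)
    (mem_insert_self _ _)

theorem part_insertIntoPart_of_mem (hB : B ∈ insert ∅ P.parts) (hx : x ∈ s) :
    (P.insertIntoPart ha B).part x = if x ∈ B then insert a B else P.part x := by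
  have hparts := P.parts_insertIntoPart ha hB
  split_ifs with hxB
  · exact part_eq_of_mem _ (hparts ▸ mem_insert_self _ _) (mem_insert_of_mem hxB)
  · have hne : P.part x ≠ B := fun h => hxB (h ▸ P.mem_part hx)
    exact part_eq_of_mem _ (hparts ▸ mem_insert_of_mem (mem_erase.2 ⟨hne, P.part_mem.2 hx⟩))
      (P.mem_part hx)

theorem erase_part_insertIntoPart (hB : B ∈ insert ∅ P.parts) (hx : x ∈ s) :
    ((P.insertIntoPart ha B).part x).erase a = P.part x := by
  rw [P.part_insertIntoPart_of_mem ha hB hx]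
  split_ifs with hxB
  · have hB' : B ∈ P.parts := (mem_insert.1 hB).resolve_left (ne_empty_of_mem hxB)
    rw [erase_insert fun h => ha (P.subset_of_mem_insert_empty_parts hB h),
      P.part_eq_of_mem hB' hxB]
  · exact erase_eq_of_notMem fun h => ha (P.part_subset x h)

theorem card_parts_insertIntoPart (hB : B ∈ insert ∅ P.parts) :
    #(P.insertIntoPart ha B).parts = #P.parts + if B = ∅ then 1 else 0 := by
  have hnew : insert a B ∉ P.parts.erase B :=
    fun h => ha (P.le (mem_of_mem_erase h) (mem_insert_self _ _))
  rw [P.parts_insertIntoPart ha hB, card_insert_of_notMem hnew]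
  rcases mem_insert.1 hB with rfl | hB
  · rw [erase_eq_of_notMem P.empty_notMem_parts, if_pos rfl]
  · rw [card_erase_add_one hB, if_neg (P.ne_empty hB), add_zero]

end InsertErase

section ErasePoint

variable (P : Finpartition (insert a s)) (ha : a ∉ s) {x : α}

theorem part_erasePoint (hx : x ∈ s) : (P.erasePoint ha).part x = (P.part x).erase a := by
  have hxa : x ≠ a := fun h => ha (h ▸ hx)
  have hx' : x ∈ insert a s := mem_insert_of_mem hx
  refine part_eq_of_mem _ ?_ (mem_erase.2 ⟨hxa, P.mem_part hx'⟩)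
  rw [erasePoint, copy_parts, mem_avoid]
  refine ⟨P.part x, P.part_mem.2 hx', fun h => hxa ?_, sdiff_singleton_eq_erase _ _⟩
  exact mem_singleton.1 (h (P.mem_part hx'))

theorem erase_part_self_mem_insert_empty_parts :
    (P.part a).erase a ∈ insert ∅ (P.erasePoint ha).parts := by
  rcases ((P.part a).erase a).eq_empty_or_nonempty with h | ⟨x, hx⟩
  · exact h ▸ mem_insert_self _ _
  · obtain ⟨hxa, hx⟩ := mem_erase.1 hx
    have hxs : x ∈ s := (mem_insert.1 (P.part_subset a hx)).resolve_left hxa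
    have hpart : P.part x = P.part a :=
      P.part_eq_of_mem (P.part_mem.2 (mem_insert_self a s)) hx
    exact mem_insert_of_mem (hpart ▸ P.part_erasePoint ha hxs ▸ (P.erasePoint ha).part_mem.2 hxs)

theorem insertIntoPart_erasePoint :
    (P.erasePoint ha).insertIntoPart ha ((P.part a).erase a) = P := by
  have hB := P.erase_part_self_mem_insert_empty_parts ha
  have haa : a ∈ P.part a := P.mem_part (mem_insert_self a s)
  refine ext_part fun x hx => ?_
  rcases mem_insert.1 hx with rfl | hxs
  · rw [part_insertIntoPart_self _ ha hB, insert_erase haa]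
  · rw [part_insertIntoPart_of_mem _ ha hB hxs]
    split_ifs with hxB
    · rw [insert_erase haa]
      exact (P.part_eq_of_mem (P.part_mem.2 (mem_insert_self a s)) (mem_of_mem_erase hxB)).symm
    · rw [P.part_erasePoint ha hxs]
      refine erase_eq_of_notMem fun haP => hxB (mem_erase.2 ⟨fun h => ha (h ▸ hxs), ?_⟩)
      rw [P.part_eq_of_mem (P.part_mem.2 hx) haP]
      exact P.mem_part hx

end ErasePoint

theorem erasePoint_insertIntoPart (P : Finpartition s) (ha : a ∉ s) {B : Finset α}
    (hB : B ∈ insert ∅ P.parts) : (P.insertIntoPart ha B).erasePoint ha = P :=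
  ext_part fun _ hx => by
    rw [part_erasePoint _ ha hx, P.erase_part_insertIntoPart ha hB hx]

theorem sum_eq_sum_sum_insertIntoPart {M : Type*} [AddCommMonoid M] (ha : a ∉ s)
    (f : Finpartition (insert a s) → M) :
    ∑ P, f P = ∑ Q : Finpartition s, ∑ B ∈ insert ∅ Q.parts, f (Q.insertIntoPart ha B) := by
  rw [← sum_fiberwise_of_maps_to (g := (erasePoint · ha)) (t := univ) fun _ _ => mem_univ _]
  refine sum_congr rfl fun Q _ => (sum_nbij' (Q.insertIntoPart ha) (fun P => (P.part a).erase a)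
    ?_ ?_ ?_ ?_ fun _ _ => rfl).symm
  · intro B hB
    exact mem_filter.2 ⟨mem_univ _, Q.erasePoint_insertIntoPart ha hB⟩
  · intro P hP
    rw [← (mem_filter.1 hP).2]
    exact P.erase_part_self_mem_insert_empty_parts ha
  · intro B hB
    rw [part_insertIntoPart_self _ ha hB, erase_insert
      fun h => ha (Q.subset_of_mem_insert_empty_parts hB h)]
  · intro P hP
    rw [← (mem_filter.1 hP).2]
    exact P.insertIntoPart_erasePoint ha

end Insertion

section Intertwining

variable {α : Type*} [LinearOrder α] {s : Finset α}

def Intertwined (P : Finpartition s) (x y : α) : Prop :=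
  x < y ∧ P.part x ≠ P.part y ∧ ∀ k ∈ P.part x ∪ P.part y, ¬ (x < k ∧ k < y)

noncomputable def intertwiningNumber (P : Finpartition s) : ℕ :=
  #{p ∈ s ×ˢ s | P.Intertwined p.1 p.2}

def partMaxima (P : Finpartition s) : Finset α := {x ∈ s | ∀ k ∈ P.part x, k ≤ x}

theorem intertwiningNumber_eq_sum (P : Finpartition s) :
    P.intertwiningNumber = ∑ y ∈ s, #{x ∈ s | P.Intertwined x y} := by
  simp only [intertwiningNumber, card_filter]
  exact sum_product_right _ _ _

variable (P : Finpartition s) {a : α} (ha : a ∉ s) {B : Finset α}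

theorem mem_part_iff_mem_part_insertIntoPart (hB : B ∈ insert ∅ P.parts) {x : α} (hx : x ∈ s)
    (k : α) :
    k ∈ P.part x ↔ k ≠ a ∧ k ∈ (P.insertIntoPart ha B).part x := by
  rw [← P.erase_part_insertIntoPart ha hB hx, mem_erase]

theorem intertwined_insertIntoPart_iff (hlt : ∀ x ∈ s, x < a) (hB : B ∈ insert ∅ P.parts)
    {x y : α} (hx : x ∈ s) (hy : y ∈ s) :
    (P.insertIntoPart ha B).Intertwined x y ↔ P.Intertwined x y := by
  have hmem : ∀ {z}, z ∈ s → ∀ k, _ := P.mem_part_iff_mem_part_insertIntoPart ha hB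
  have hpart : (P.insertIntoPart ha B).part x = (P.insertIntoPart ha B).part y ↔
      P.part x = P.part y := by
    rw [← mem_part_iff_part_eq_part _ (mem_insert_of_mem hx) (mem_insert_of_mem hy),
      ← P.mem_part_iff_part_eq_part hx hy, hmem hy, and_iff_right (ne_of_lt (hlt x hx))]
  have hbetween : (∀ k ∈ (P.insertIntoPart ha B).part x ∪ (P.insertIntoPart ha B).part y,
      ¬ (x < k ∧ k < y)) ↔ ∀ k ∈ P.part x ∪ P.part y, ¬ (x < k ∧ k < y) := by
    simp only [mem_union, hmem hx, hmem hy]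
    refine ⟨fun h k hk => h k (by tauto), fun h k hk hxky => ?_⟩
    by_cases hka : k = a
    · exact (hlt y hy).not_gt (hka ▸ hxky.2)
    · exact h k (by tauto) hxky
  simp only [Intertwined, ne_eq, hpart, hbetween]

theorem intertwined_insertIntoPart_self_iff (hlt : ∀ x ∈ s, x < a)
    (hB : B ∈ insert ∅ P.parts) {x : α} (hx : x ∈ s) :
    (P.insertIntoPart ha B).Intertwined x a ↔ (∀ k ∈ P.part x, k ≤ x) ∧ ∀ b ∈ B, b < x := by
  have hBs := P.subset_of_mem_insert_empty_parts hB
  rw [Intertwined, P.part_insertIntoPart_self ha hB, and_iff_right (hlt x hx),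
    P.part_insertIntoPart_of_mem ha hB hx]
  split_ifs with hxB
  · simp only [ne_eq, not_true_eq_false, false_and, false_iff, not_and]
    exact fun _ h => lt_irrefl x (h x hxB)
  · have hxa : x ∉ insert a B := by
      simp only [mem_insert, not_or]
      exact ⟨(hlt x hx).ne, hxB⟩
    have hne : P.part x ≠ insert a B := fun h => hxa (h ▸ P.mem_part hx)
    simp only [ne_eq, hne, not_false_eq_true, true_and, mem_union, mem_insert]
    constructor
    · intro h
      have hle : ∀ k ∈ P.part x ∪ B, k ≤ x := fun k hk => le_of_not_gt fun hxk =>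
        h k (by simp only [mem_union] at hk; tauto)
          ⟨hxk, hlt k (union_subset (P.part_subset x) hBs hk)⟩
      exact ⟨fun k hk => hle k (mem_union_left _ hk),
        fun b hb => (hle b (mem_union_right _ hb)).lt_of_ne fun h => hxB (h ▸ hb)⟩
    · rintro ⟨hP, hB⟩ k (hk | rfl | hk) hxka
      · exact (hP k hk).not_gt hxka.1
      · exact lt_irrefl k hxka.2
      · exact (hB k hk).not_gt hxka.1

theorem intertwiningNumber_insertIntoPart (hlt : ∀ x ∈ s, x < a) (hB : B ∈ insert ∅ P.parts) :
    (P.insertIntoPart ha B).intertwiningNumber =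
      P.intertwiningNumber + #{m ∈ P.partMaxima | ∀ b ∈ B, b < m} := by
  rw [intertwiningNumber_eq_sum, sum_insert ha, intertwiningNumber_eq_sum, add_comm]
  congr 1
  · refine sum_congr rfl fun y hy => ?_
    rw [filter_insert, if_neg fun h => (hlt y hy).not_gt h.1]
    exact congrArg card (filter_congr fun x hx => P.intertwined_insertIntoPart_iff ha hlt hB hx hy)
  · rw [filter_insert, if_neg fun h => lt_irrefl a h.1, partMaxima, filter_filter]
    exact congrArg card
      (filter_congr fun x hx => P.intertwined_insertIntoPart_self_iff ha hlt hB hx)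

theorem bijOn_part_partMaxima : Set.BijOn P.part P.partMaxima P.parts := by
  refine ⟨fun m hm => P.part_mem.2 (mem_filter.1 hm).1, fun m₁ hm₁ m₂ hm₂ h => ?_, fun C hC => ?_⟩
  · obtain ⟨hm₁s, hmax₁⟩ := mem_filter.1 hm₁
    obtain ⟨hm₂s, hmax₂⟩ := mem_filter.1 hm₂
    refine le_antisymm (hmax₂ m₁ ?_) (hmax₁ m₂ ?_)
    · exact h ▸ P.mem_part hm₁s
    · exact h.symm ▸ P.mem_part hm₂s
  · have hne := P.nonempty_of_mem_parts hC
    have hmC := C.max'_mem hne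
    have hpart := P.part_eq_of_mem hC hmC
    refine ⟨C.max' hne, mem_filter.2 ⟨P.le hC hmC, ?_⟩, hpart⟩
    exact fun k hk => C.le_max' k (hpart ▸ hk)

theorem card_partMaxima : #P.partMaxima = #P.parts :=
  card_nbij _ P.bijOn_part_partMaxima.mapsTo P.bijOn_part_partMaxima.injOn
    P.bijOn_part_partMaxima.surjOn

theorem sum_parts_card_filter_partMaxima {M : Type*} [AddCommMonoid M] (f : ℕ → M) :
    ∑ B ∈ P.parts, f #{m ∈ P.partMaxima | ∀ b ∈ B, b < m} = ∑ j ∈ range #P.parts, f j := by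
  have hbij := P.bijOn_part_partMaxima
  rw [← sum_nbij P.part hbij.mapsTo hbij.injOn hbij.surjOn fun _ _ => rfl, ← card_partMaxima,
    ← Finset.sum_card_filter_gt_eq_sum_range _ f]
  refine sum_congr rfl fun m hm => congrArg f (congrArg card (filter_congr fun m' _ => ?_))
  obtain ⟨hms, hmax⟩ := mem_filter.1 hm
  exact ⟨fun h => h m (P.mem_part hms), fun h b hb => (hmax b hb).trans_lt h⟩

theorem sum_insert_empty_parts_insertIntoPart {M : Type*} [AddCommMonoid M]
    (hlt : ∀ x ∈ s, x < a) (f : ℕ → ℕ → M) :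
    ∑ B ∈ insert ∅ P.parts,
        f (P.insertIntoPart ha B).intertwiningNumber #(P.insertIntoPart ha B).parts =
      f (P.intertwiningNumber + #P.parts) (#P.parts + 1) +
        ∑ j ∈ range #P.parts, f (P.intertwiningNumber + j) #P.parts := by
  rw [sum_insert P.empty_notMem_parts, P.intertwiningNumber_insertIntoPart ha hlt
    (mem_insert_self _ _), P.card_parts_insertIntoPart ha (mem_insert_self _ _), if_pos rfl]
  simp only [notMem_empty, IsEmpty.forall_iff, implies_true, filter_true, card_partMaxima]
  rw [← P.sum_parts_card_filter_partMaxima fun j => f (P.intertwiningNumber + j) #P.parts]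
  refine congrArg _ (sum_congr rfl fun B hB => ?_)
  have hB' : B ∈ insert ∅ P.parts := mem_insert_of_mem hB
  rw [P.intertwiningNumber_insertIntoPart ha hlt hB', P.card_parts_insertIntoPart ha hB',
    if_neg (P.ne_empty hB), add_zero]

noncomputable def signSum (s : Finset α) : ℤ := ∑ P : Finpartition s, (-1) ^ P.intertwiningNumber

noncomputable def blockSignSum (s : Finset α) : ℤ :=
  ∑ P : Finpartition s, (-1) ^ (P.intertwiningNumber + #P.parts)

theorem two_mul_signSum_insert (hlt : ∀ x ∈ s, x < a) :
    2 * signSum (insert a s) = signSum s + blockSignSum s := by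
  have ha : a ∉ s := fun h => lt_irrefl a (hlt a h)
  rw [signSum, sum_eq_sum_sum_insertIntoPart ha, mul_sum, signSum, blockSignSum,
    ← sum_add_distrib]
  refine sum_congr rfl fun Q _ => ?_
  have h := Q.sum_insert_empty_parts_insertIntoPart ha hlt fun i _ => (-1 : ℤ) ^ i
  beta_reduce at h
  rw [h]
  simp only [pow_add, ← mul_sum, neg_one_geom_sum]
  rcases Nat.even_or_odd #Q.parts with hk | hk
  · rw [if_pos hk, hk.neg_one_pow]
    ring
  · rw [if_neg (Nat.not_even_iff_odd.2 hk), hk.neg_one_pow]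
    ring

theorem two_mul_blockSignSum_insert (hlt : ∀ x ∈ s, x < a) :
    2 * blockSignSum (insert a s) = -3 * signSum s + blockSignSum s := by
  have ha : a ∉ s := fun h => lt_irrefl a (hlt a h)
  rw [blockSignSum, sum_eq_sum_sum_insertIntoPart ha, mul_sum, signSum, blockSignSum, mul_sum,
    ← sum_add_distrib]
  refine sum_congr rfl fun Q _ => ?_
  have h := Q.sum_insert_empty_parts_insertIntoPart ha hlt fun i k => (-1 : ℤ) ^ (i + k)
  beta_reduce at h
  rw [h]
  simp only [pow_add, ← mul_sum, ← sum_mul, neg_one_geom_sum]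
  rcases Nat.even_or_odd #Q.parts with hk | hk
  · rw [if_pos hk, hk.neg_one_pow]
    ring
  · rw [if_neg (Nat.not_even_iff_odd.2 hk), hk.neg_one_pow]
    ring

theorem signSum_eq_and_blockSignSum_eq (s : Finset α) :
    signSum s = (-1) ^ #s * (if #s % 3 = 0 then 1 else if #s % 3 = 1 then -1 else 0) ∧
      blockSignSum s = (-1) ^ #s * (if #s % 3 = 2 then -2 else 1) := by
  induction s using Finset.induction_on_max with
  | empty =>
    let _ : Unique (Finpartition (∅ : Finset α)) := inferInstanceAs (Unique (Finpartition ⊥))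
    have h0 : (default : Finpartition (∅ : Finset α)).intertwiningNumber = 0 := by
      simp [intertwiningNumber]
    have h1 : #(default : Finpartition (∅ : Finset α)).parts = 0 := by
      simp [parts_eq_empty_iff, bot_eq_empty]
    simp [signSum, blockSignSum, h0, h1]
  | insert a s hlt ih =>
    have ha : a ∉ s := fun h => lt_irrefl a (hlt a h)
    have hT := two_mul_signSum_insert hlt
    have hU := two_mul_blockSignSum_insert hlt
    rw [ih.1, ih.2] at hT hU
    rw [card_insert_of_notMem ha, pow_succ]
    rcases (by omega : #s % 3 = 0 ∧ (#s + 1) % 3 = 1 ∨ #s % 3 = 1 ∧ (#s + 1) % 3 = 2 ∨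
      #s % 3 = 2 ∧ (#s + 1) % 3 = 0) with ⟨h, h'⟩ | ⟨h, h'⟩ | ⟨h, h'⟩ <;>
    · simp only [h, h'] at hT hU ⊢
      norm_num at hT hU ⊢
      constructor <;> linarith

end Intertwining

end Finpartition

theorem inumber_eq_intertwiningNumber (n : ℕ) (A : Finpartition (Finset.Icc 1 n)) :
    inumber n A = A.intertwiningNumber := by
  refine congrArg card (filter_congr fun p hp => ?_)
  obtain ⟨hx, hy⟩ := mem_product.1 hp
  constructor
  · rintro ⟨hlt, B, hB, C, hC, hne, hxB, hyC, hbetween⟩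
    rw [Finpartition.Intertwined, A.part_eq_of_mem hB hxB, A.part_eq_of_mem hC hyC]
    exact ⟨hlt, hne, hbetween⟩
  · rintro ⟨hlt, hne, hbetween⟩
    exact ⟨hlt, _, A.part_mem.2 hx, _, A.part_mem.2 hy, hne, A.mem_part hx, A.mem_part hy, hbetween⟩

theorem inumber_gen_at_neg_one_general (n : ℕ) :
    (n % 3 = 0 →
      ∑ A : Finpartition (Finset.Icc 1 n), (-1 : ℤ) ^ inumber n A = (-1) ^ n) ∧
    (n % 3 = 1 →
      ∑ A : Finpartition (Finset.Icc 1 n), (-1 : ℤ) ^ inumber n A = (-1) ^ (n + 1)) ∧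
    (n % 3 = 2 →
      ∑ A : Finpartition (Finset.Icc 1 n), (-1 : ℤ) ^ inumber n A = 0) := by
  have hsum : ∑ A : Finpartition (Finset.Icc 1 n), (-1 : ℤ) ^ inumber n A =
      Finpartition.signSum (Finset.Icc 1 n) := by
    simp only [inumber_eq_intertwiningNumber]
    rfl
  rw [hsum, (Finpartition.signSum_eq_and_blockSignSum_eq _).1, Nat.card_Icc, Nat.add_sub_cancel]
  refine ⟨fun h => ?_, fun h => ?_, fun h => ?_⟩ <;> simp [h, pow_succ]

/-- For `n ≥ 1`, `Σ_{A ∈ Π_n} (−1)^{i(A)}` equals `(−1)^n` if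
`n ≡ 0 (mod 3)`, equals `(−1)^{n+1}` if `n ≡ 1 (mod 3)`, and equals `0` if
`n ≡ 2 (mod 3)`. -/
theorem inumber_gen_at_neg_one (n : ℕ) (hn : 1 ≤ n) :
    (n % 3 = 0 →
      ∑ A : Finpartition (Finset.Icc 1 n), (-1 : ℤ) ^ inumber n A = (-1) ^ n) ∧
    (n % 3 = 1 →
      ∑ A : Finpartition (Finset.Icc 1 n), (-1 : ℤ) ^ inumber n A = (-1) ^ (n + 1)) ∧
    (n % 3 = 2 →
      ∑ A : Finpartition (Finset.Icc 1 n), (-1 : ℤ) ^ inumber n A = 0) :=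
  inumber_gen_at_neg_one_general n
end

section
/- Let n ≥ 1. Then for every nonzero rational number q (equivalently, as an identity of rational functions in an indeterminate q), Σ_{A ∈ Π_n} q^{t(A)}·(1 − q^{−1})^{a(A)} = q^{n(n−1)/2}, where a(A) denotes the number of arcs of A. -/
open Finset
open scoped Classical

/-!
Induct on `n` by inserting `n + 1` into a partition `A` of `{1, …, n}` with `m` arcs. As a
singleton block it adds no arc and raises `t` by `m`; on top of a block `B` it adds the arc
`(max B, n + 1)` and raises `t` by `max B + #{arcs starting after max B}`. The block maxima are
exactly the vertices starting no arc, so this increment is `m + r`, where `r` is the rank of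
`max B` among the block maxima: the increments run through `m + 1, …, n`. Hence `A` contributes
`q^t (1 - q⁻¹)^m (q^m + (1 - q⁻¹)(q^(m+1) + ⋯ + q^n)) = q^t (1 - q⁻¹)^m q^n`, the bracket
telescoping.
-/

namespace Finpartition

variable {α : Type*} [DecidableEq α] {s t : Finset α} {a : α}

theorem notMem_of_mem_parts (P : Finpartition s) {B : Finset α} (hB : B ∈ P.parts)
    (ha : a ∉ s) : a ∉ B :=
  fun h => ha (P.le hB h)

theorem image_inter_eq_self (P : Finpartition s) {X : Finset (Finset α)} (hX : X ⊆ P.parts) :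
    X.image (· ∩ s) = X := by
  rw [image_congr fun C hC => inter_eq_left.2 (P.le (hX hC)), image_id']

def extendSingleton (P : Finpartition s) (ha : a ∉ s) (ht : insert a s = t) :
    Finpartition t :=
  P.extend (singleton_ne_empty a) (disjoint_singleton_right.2 ha)
    (by rw [sup_eq_union, union_comm, ← insert_eq, ht])

@[simp]
theorem parts_extendSingleton (P : Finpartition s) (ha : a ∉ s) (ht : insert a s = t) :
    (P.extendSingleton ha ht).parts = insert {a} P.parts :=
  rfl

theorem sup_erase_parts (P : Finpartition s) {B : Finset α} (hB : B ∈ P.parts) :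
    (P.parts.erase B).sup id = s \ B := by
  ext x
  simp only [mem_sup, mem_erase, id, mem_sdiff]
  constructor
  · rintro ⟨C, ⟨hCB, hC⟩, hxC⟩
    exact ⟨P.le hC hxC, fun hxB => hCB (P.eq_of_mem_parts hC hB hxC hxB)⟩
  · rintro ⟨hxs, hxB⟩
    obtain ⟨C, hC, hxC⟩ := P.exists_mem hxs
    exact ⟨C, ⟨fun hCB => hxB (hCB ▸ hxC), hC⟩, hxC⟩

def insertInPart (P : Finpartition s) {B : Finset α} (hB : B ∈ P.parts) (ha : a ∉ s)
    (ht : insert a s = t) : Finpartition t :=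
  (P.ofSubset (erase_subset B P.parts) (P.sup_erase_parts hB)).extend
    (insert_ne_empty a B)
    (disjoint_insert_right.2 ⟨fun h => ha (mem_sdiff.1 h).1, sdiff_disjoint⟩)
    (by rw [sup_eq_union, union_insert, sdiff_union_of_subset (P.le hB), ht])

@[simp]
theorem parts_insertInPart (P : Finpartition s) {B : Finset α} (hB : B ∈ P.parts) (ha : a ∉ s)
    (ht : insert a s = t) :
    (P.insertInPart hB ha ht).parts = insert (insert a B) (P.parts.erase B) :=
  rfl

theorem parts_restrict (P : Finpartition t) (hst : s ⊆ t) :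
    (P.restrict hst).parts = (P.parts.image (· ∩ s)).erase ∅ :=
  rfl

theorem restrict_extendSingleton (P : Finpartition s) (ha : a ∉ s) (ht : insert a s = t) :
    (P.extendSingleton ha ht).restrict (ht ▸ subset_insert a s) = P := by
  ext1
  simp only [parts_restrict, parts_extendSingleton, image_insert,
    singleton_inter_of_notMem ha, P.image_inter_eq_self subset_rfl]
  exact erase_insert P.empty_notMem_parts

theorem restrict_insertInPart (P : Finpartition s) {B : Finset α} (hB : B ∈ P.parts)
    (ha : a ∉ s) (ht : insert a s = t) :
    (P.insertInPart hB ha ht).restrict (ht ▸ subset_insert a s) = P := by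
  ext1
  simp only [parts_restrict, parts_insertInPart, image_insert,
    insert_inter_of_notMem ha, inter_eq_left.2 (P.le hB),
    P.image_inter_eq_self (erase_subset B P.parts), insert_erase hB]
  exact erase_eq_of_notMem P.empty_notMem_parts

theorem extendSingleton_ne_insertInPart (P : Finpartition s) {B : Finset α} (hB : B ∈ P.parts)
    (ha : a ∉ s) (ht : insert a s = t) :
    P.extendSingleton ha ht ≠ P.insertInPart hB ha ht := by
  intro h
  have hmem : {a} ∈ (P.insertInPart hB ha ht).parts := h ▸ mem_insert_self _ _
  rcases mem_insert.1 hmem with hB' | hB'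
  · obtain ⟨x, hx⟩ := P.nonempty_of_mem_parts hB
    have : x = a := mem_singleton.1 (hB' ▸ mem_insert_of_mem hx)
    exact P.notMem_of_mem_parts hB ha (this ▸ hx)
  · exact P.notMem_of_mem_parts (mem_of_mem_erase hB') ha (mem_singleton_self a)

theorem insertInPart_injective (P : Finpartition s) {B B' : Finset α} (hB : B ∈ P.parts)
    (hB' : B' ∈ P.parts) (ha : a ∉ s) (ht : insert a s = t)
    (h : P.insertInPart hB ha ht = P.insertInPart hB' ha ht) : B = B' := by
  have hmem : insert a B ∈ (P.insertInPart hB' ha ht).parts := h ▸ mem_insert_self _ _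
  rcases mem_insert.1 hmem with hBB' | hB''
  · rw [← erase_insert (P.notMem_of_mem_parts hB ha), hBB',
      erase_insert (P.notMem_of_mem_parts hB' ha)]
  · exact absurd (mem_insert_self a B)
      (P.notMem_of_mem_parts (mem_of_mem_erase hB'') ha)

theorem parts_restrict_of_insert (P : Finpartition t) (ha : a ∉ s) (ht : insert a s = t) :
    (P.restrict (ht ▸ subset_insert a s)).parts =
      (insert ((P.part a).erase a) (P.parts.erase (P.part a))).erase ∅ := by
  have hat : a ∈ t := ht ▸ mem_insert_self a s
  have hinter : ∀ D ∈ P.parts, D ∩ s = D.erase a := fun D hD => by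
    ext x
    have hxD : x ∈ D → x = a ∨ x ∈ s := fun hx => mem_insert.1 (ht ▸ P.le hD hx)
    simp only [mem_inter, mem_erase]
    exact ⟨fun ⟨hx, hxs⟩ => ⟨fun hxa => ha (hxa ▸ hxs), hx⟩,
      fun ⟨hxa, hx⟩ => ⟨hx, (hxD hx).resolve_left hxa⟩⟩
  have hother : ∀ D ∈ P.parts.erase (P.part a), D ∩ s = D := fun D hD => by
    rw [hinter D (mem_of_mem_erase hD), erase_eq_of_notMem fun haD => ne_of_mem_erase hD
      (P.eq_of_mem_parts (mem_of_mem_erase hD) (P.part_mem.2 hat) haD (P.mem_part hat))]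
  rw [parts_restrict, ← insert_erase (P.part_mem.2 hat), image_insert,
    hinter _ (P.part_mem.2 hat), image_congr hother, image_id',
    erase_insert (notMem_erase _ _)]

theorem eq_extendSingleton_or_eq_insertInPart (P : Finpartition t) (ha : a ∉ s)
    (ht : insert a s = t) :
    P = (P.restrict (ht ▸ subset_insert a s)).extendSingleton ha ht ∨
      ∃ (B : Finset α) (hB : B ∈ (P.restrict (ht ▸ subset_insert a s)).parts),
        P = (P.restrict (ht ▸ subset_insert a s)).insertInPart hB ha ht := by
  have hat : a ∈ t := ht ▸ mem_insert_self a s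
  have hC : P.part a ∈ P.parts := P.part_mem.2 hat
  have haC : a ∈ P.part a := P.mem_part hat
  have hRempty : ∅ ∉ P.parts.erase (P.part a) :=
    fun h => P.empty_notMem_parts (mem_of_mem_erase h)
  have hparts := P.parts_restrict_of_insert ha ht
  by_cases hCa : (P.part a).erase a = ∅
  · left
    ext1
    rw [parts_extendSingleton, hparts, hCa, erase_insert hRempty,
      ← ((erase_eq_empty_iff _ a).1 hCa).resolve_left (ne_empty_of_mem haC), insert_erase hC]
  · right
    rw [erase_eq_of_notMem fun h => (mem_insert.1 h).elim (fun h => hCa h.symm) hRempty]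
      at hparts
    refine ⟨(P.part a).erase a, hparts ▸ mem_insert_self _ _, ?_⟩
    have hCaR : (P.part a).erase a ∉ P.parts.erase (P.part a) := fun h => by
      obtain ⟨x, hx⟩ := nonempty_iff_ne_empty.2 hCa
      have := P.eq_of_mem_parts (mem_of_mem_erase h) hC hx (mem_of_mem_erase hx)
      exact (this ▸ notMem_erase a (P.part a)) haC
    ext1
    rw [parts_insertInPart, hparts, erase_insert hCaR, insert_erase haC, insert_erase hC]

theorem filter_restrict_eq (A : Finpartition s) (ha : a ∉ s) (ht : insert a s = t) :
    ({P | P.restrict (ht ▸ subset_insert a s) = A} : Finset (Finpartition t)) =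
      insert (A.extendSingleton ha ht)
        (A.parts.attach.image fun B => A.insertInPart B.2 ha ht) := by
  ext P
  simp only [mem_filter, mem_univ, true_and, mem_insert, mem_image, mem_attach]
  constructor
  · rintro rfl
    rcases P.eq_extendSingleton_or_eq_insertInPart ha ht with h | ⟨B, hB, h⟩
    · exact Or.inl h
    · exact Or.inr ⟨⟨B, hB⟩, h.symm⟩
  · rintro (rfl | ⟨B, -, rfl⟩)
    · exact A.restrict_extendSingleton ha ht
    · exact A.restrict_insertInPart B.2 ha ht

theorem sum_finpartition_insert {M : Type*} [AddCommMonoid M] (ha : a ∉ s)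
    (ht : insert a s = t) (f : Finpartition t → M) :
    ∑ P, f P = ∑ A : Finpartition s,
      (f (A.extendSingleton ha ht) + ∑ B ∈ A.parts.attach, f (A.insertInPart B.2 ha ht)) := by
  rw [← sum_fiberwise_of_maps_to (g := fun P => P.restrict (ht ▸ subset_insert a s))
    fun _ _ => mem_univ _]
  refine sum_congr rfl fun A _ => ?_
  have hnotMem : A.extendSingleton ha ht ∉
      A.parts.attach.image fun B => A.insertInPart B.2 ha ht := by
    simp only [mem_image, not_exists, not_and]
    exact fun B _ => (A.extendSingleton_ne_insertInPart B.2 ha ht).symm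
  rw [filter_restrict_eq A ha ht, sum_insert hnotMem, sum_image fun B _ B' _ h =>
    Subtype.ext (A.insertInPart_injective B.2 B'.2 ha ht h)]

end Finpartition

theorem Finset.sum_card_filter_le {α β : Type*} [LinearOrder α] [AddCommMonoid β]
    (M : Finset α) (f : ℕ → β) :
    ∑ b ∈ M, f #{c ∈ M | c ≤ b} = ∑ j ∈ Icc 1 #M, f j := by
  have hlt : ∀ b ∈ M, ∀ b' ∈ M, b < b' → #{c ∈ M | c ≤ b} < #{c ∈ M | c ≤ b'} :=
    fun b _ b' hb' hbb' => card_lt_card <| ssubset_iff_of_subset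
      (monotone_filter_right M fun _ _ hc => hc.trans hbb'.le) |>.2
      ⟨b', mem_filter.2 ⟨hb', le_rfl⟩, fun h => (mem_filter.1 h).2.not_gt hbb'⟩
  have hinj : Set.InjOn (fun b => #{c ∈ M | c ≤ b}) M := fun b hb b' hb' h => by
    rcases lt_trichotomy b b' with hbb' | rfl | hbb'
    · exact absurd h (hlt b hb b' hb' hbb').ne
    · rfl
    · exact absurd h (hlt b' hb' b hb hbb').ne'
  have himage : M.image (fun b => #{c ∈ M | c ≤ b}) = Icc 1 #M := by
    refine eq_of_subset_of_card_le (fun j hj => ?_) ?_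
    · obtain ⟨b, hb, rfl⟩ := mem_image.1 hj
      exact mem_Icc.2 ⟨card_pos.2 ⟨b, mem_filter.2 ⟨hb, le_rfl⟩⟩, card_filter_le _ _⟩
    · rw [card_image_of_injOn hinj, Nat.card_Icc, Nat.add_sub_cancel]
  rw [← himage, sum_image hinj]

theorem Finset.add_card_filter_lt_eq_card_add_card_filter_le {n b : ℕ} {L : Finset ℕ}
    (hL : L ⊆ Icc 1 n) (hb : b ∈ Icc 1 n) :
    b + #{x ∈ L | b < x} = #L + #{c ∈ Icc 1 n \ L | c ≤ b} := by
  have hleft : #{x ∈ L | b < x} + #{x ∈ L | ¬b < x} = #L := card_filter_add_card_filter_not _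
  have hIcc : #{x ∈ Icc 1 n | x ≤ b} = b := by
    rw [show {x ∈ Icc 1 n | x ≤ b} = Icc 1 b by
      ext x; simp only [mem_filter, mem_Icc] at hb ⊢; omega, Nat.card_Icc,
      Nat.add_sub_cancel]
  have hsub : {x ∈ L | x ≤ b} ⊆ {x ∈ Icc 1 n | x ≤ b} := monotone_filter_left _ hL
  have hsdiff :
      {c ∈ Icc 1 n \ L | c ≤ b} = {x ∈ Icc 1 n | x ≤ b} \ {x ∈ L | x ≤ b} := by
    ext x
    simp only [mem_filter, mem_sdiff]
    tauto
  rw [hsdiff, card_sdiff_of_subset hsub, hIcc]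
  have := card_le_card hsub
  simp only [not_lt] at hleft
  omega

theorem pow_add_one_sub_inv_mul_sum {K : Type*} [Field K] {q : K} (hq : q ≠ 0) (m k : ℕ) :
    q ^ m + (1 - q⁻¹) * ∑ j ∈ Icc 1 k, q ^ (m + j) = q ^ (m + k) := by
  induction k with
  | zero => simp
  | succ k ih =>
    rw [sum_Icc_succ_top (by omega), mul_add, ← add_assoc, ih, sub_mul, one_mul,
      ← add_assoc m k 1, pow_succ' q (m + k), inv_mul_cancel_left₀ hq]
    ring

section DepthStat

variable {n b : ℕ} {S : Finset (ℕ × ℕ)}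

def depthStat (n : ℕ) (S : Finset (ℕ × ℕ)) : ℤ :=
  ∑ i ∈ Icc 1 #S, ((n : ℤ) - i) - ∑ v ∈ Icc 1 n, (#{p ∈ S | p.1 < v ∧ v < p.2} : ℤ)
    + ∑ α ∈ S, (#{p ∈ S | p.1 < α.1 ∧ α.2 < p.2} : ℤ)

theorem depthIndex_eq_depthStat (A : Finpartition (Icc 1 n)) :
    depthIndex n A = depthStat n (arcs n A) :=
  rfl

theorem sum_card_filter_lt_lt (hS : ∀ p ∈ S, p.2 ≤ n + 1) :
    ∑ v ∈ Icc 1 n, #{p ∈ S | p.1 < v ∧ v < p.2} = ∑ p ∈ S, (p.2 - p.1 - 1) := by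
  simp only [card_filter]
  rw [sum_comm]
  refine sum_congr rfl fun p hp => ?_
  rw [← card_filter, ← Nat.card_Ioo]
  congr 1
  ext v
  have := hS p hp
  simp only [mem_filter, mem_Icc, mem_Ioo]
  omega

theorem depthStat_succ (hS : ∀ p ∈ S, p.2 ≤ n) :
    depthStat (n + 1) S = depthStat n S + #S := by
  have hvertex : ∑ v ∈ Icc 1 (n + 1), #{p ∈ S | p.1 < v ∧ v < p.2}
      = ∑ v ∈ Icc 1 n, #{p ∈ S | p.1 < v ∧ v < p.2} := by
    rw [sum_card_filter_lt_lt fun p hp => (hS p hp).trans (by omega),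
      sum_card_filter_lt_lt fun p hp => (hS p hp).trans (by omega)]
  unfold depthStat
  rw [← Nat.cast_sum, hvertex, Nat.cast_sum]
  simp only [Nat.cast_add, Nat.cast_one, add_sub_right_comm _ (1 : ℤ), sum_add_distrib,
    sum_const, Nat.card_Icc, add_tsub_cancel_right, nsmul_eq_mul, mul_one]
  ring

theorem depthStat_succ_insert (hS : ∀ p ∈ S, p.2 ≤ n) (hb : b ≤ n) :
    depthStat (n + 1) (insert (b, n + 1) S) = depthStat n S + b + #{p ∈ S | b < p.1} := by
  have hnew : (b, n + 1) ∉ S := fun h => by have := hS _ h; simp at this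
  have hvertex : ∑ v ∈ Icc 1 (n + 1), #{p ∈ insert (b, n + 1) S | p.1 < v ∧ v < p.2}
      = ∑ v ∈ Icc 1 n, #{p ∈ S | p.1 < v ∧ v < p.2} + (n - b) := by
    rw [sum_card_filter_lt_lt, sum_card_filter_lt_lt fun p hp => (hS p hp).trans (by omega),
      sum_insert hnew, add_comm]
    · congr 1
      omega
    simp only [forall_mem_insert]
    exact ⟨by omega, fun p hp => by have := hS p hp; omega⟩
  have harc :
      ∑ α ∈ insert (b, n + 1) S, #{p ∈ insert (b, n + 1) S | p.1 < α.1 ∧ α.2 < p.2}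
      = ∑ α ∈ S, #{p ∈ S | p.1 < α.1 ∧ α.2 < p.2} + #{p ∈ S | b < p.1} := by
    have hfirst : ∀ p ∈ S, ¬(p.1 < b ∧ n + 1 < p.2) := fun p hp => by
      have := hS p hp; omega
    have hlast : ∀ α ∈ S, (b < α.1 ∧ α.2 < n + 1) ↔ b < α.1 := fun α hα => by
      have := hS α hα; omega
    have hzero : #{p ∈ insert (b, n + 1) S | p.1 < b ∧ n + 1 < p.2} = 0 := by
      rw [card_eq_zero, filter_eq_empty_iff]
      simpa only [forall_mem_insert, lt_irrefl, false_and, not_false_eq_true, true_and]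
        using hfirst
    have hold : ∀ α ∈ S, #{p ∈ insert (b, n + 1) S | p.1 < α.1 ∧ α.2 < p.2}
        = #{p ∈ S | p.1 < α.1 ∧ α.2 < p.2} + if b < α.1 then 1 else 0 := fun α hα => by
      rw [filter_insert, if_congr (hlast α hα) rfl rfl]
      split_ifs
      · exact card_insert_of_notMem fun h => hnew (mem_filter.1 h).1
      · rfl
    rw [sum_insert hnew, hzero, zero_add, sum_congr rfl hold, sum_add_distrib, ← card_filter]
  unfold depthStat
  rw [card_insert_of_notMem hnew, ← Nat.cast_sum, hvertex, ← Nat.cast_sum, harc,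
    sum_Icc_succ_top (by omega)]
  push_cast
  simp only [add_sub_right_comm _ (1 : ℤ), sum_add_distrib, sum_const, Nat.card_Icc,
    add_tsub_cancel_right, nsmul_eq_mul, mul_one, Nat.cast_sub hb]
  ring

end DepthStat

def IsConsecutiveIn (B : Finset ℕ) (p : ℕ × ℕ) : Prop :=
  p.1 ∈ B ∧ p.2 ∈ B ∧ p.1 < p.2 ∧ ∀ k ∈ B, ¬(p.1 < k ∧ k < p.2)

theorem not_isConsecutiveIn_singleton (a : ℕ) (p : ℕ × ℕ) : ¬IsConsecutiveIn {a} p := by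
  rintro ⟨h1, h2, hlt, -⟩
  rw [mem_singleton] at h1 h2
  omega

theorem isConsecutiveIn_insert_of_forall_lt {B : Finset ℕ} {a : ℕ} (hB : B.Nonempty)
    (h : ∀ x ∈ B, x < a) (p : ℕ × ℕ) :
    IsConsecutiveIn (insert a B) p ↔ IsConsecutiveIn B p ∨ p = (B.max' hB, a) := by
  have hmax := h _ (B.max'_mem hB)
  constructor
  · rintro ⟨h1, h2, hlt, hgap⟩
    have h1B : p.1 ∈ B := (mem_insert.1 h1).resolve_left fun h1a => by
      rcases mem_insert.1 h2 with h2a | h2B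
      · omega
      · have := h _ h2B; omega
    rcases mem_insert.1 h2 with h2a | h2B
    · right
      refine Prod.ext (le_antisymm (B.le_max' _ h1B) ?_) h2a
      by_contra hlt'
      exact hgap _ (mem_insert_of_mem (B.max'_mem hB)) ⟨by omega, by omega⟩
    · exact Or.inl ⟨h1B, h2B, hlt, fun k hk => hgap k (mem_insert_of_mem hk)⟩
  · rintro (⟨h1, h2, hlt, hgap⟩ | rfl)
    · refine ⟨mem_insert_of_mem h1, mem_insert_of_mem h2, hlt, fun k hk => ?_⟩
      rcases mem_insert.1 hk with rfl | hkB
      · have := h _ h2; omega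
      · exact hgap k hkB
    · refine ⟨mem_insert_of_mem (B.max'_mem hB), mem_insert_self a B, hmax, fun k hk => ?_⟩
      rcases mem_insert.1 hk with rfl | hkB
      · omega
      · have := B.le_max' k hkB; omega

section Arcs

variable {n : ℕ}

theorem mem_arcs {A : Finpartition (Icc 1 n)} {p : ℕ × ℕ} :
    p ∈ arcs n A ↔ ∃ B ∈ A.parts, IsConsecutiveIn B p := by
  simp only [arcs, mem_filter, mem_product, IsConsecutiveIn]
  constructor
  · rintro ⟨-, hlt, B, hB, h1, h2, hgap⟩
    exact ⟨B, hB, h1, h2, hlt, hgap⟩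
  · rintro ⟨B, hB, h1, h2, hlt, hgap⟩
    exact ⟨⟨A.le hB h1, A.le hB h2⟩, hlt, B, hB, h1, h2, hgap⟩

theorem snd_le_of_mem_arcs {A : Finpartition (Icc 1 n)} {p : ℕ × ℕ} (hp : p ∈ arcs n A) :
    p.2 ≤ n := by
  obtain ⟨B, hB, -, h2, -⟩ := mem_arcs.1 hp
  exact (mem_Icc.1 (A.le hB h2)).2

theorem succ_notMem_Icc_one : n + 1 ∉ Icc 1 n := by simp

theorem insert_succ_Icc_one : insert (n + 1) (Icc 1 n) = Icc 1 (n + 1) :=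
  insert_Icc_right_eq_Icc_add_one (by omega)

theorem arcs_extendSingleton (A : Finpartition (Icc 1 n)) :
    arcs (n + 1) (A.extendSingleton succ_notMem_Icc_one insert_succ_Icc_one) = arcs n A := by
  ext p
  simp only [mem_arcs, Finpartition.parts_extendSingleton, exists_mem_insert,
    not_isConsecutiveIn_singleton, false_or]

theorem arcs_insertInPart (A : Finpartition (Icc 1 n)) {B : Finset ℕ} (hB : B ∈ A.parts) :
    arcs (n + 1) (A.insertInPart hB succ_notMem_Icc_one insert_succ_Icc_one) =
      insert (B.max' (A.nonempty_of_mem_parts hB), n + 1) (arcs n A) := by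
  have hlt : ∀ x ∈ B, x < n + 1 := fun x hx => Nat.lt_succ_of_le (mem_Icc.1 (A.le hB hx)).2
  ext p
  have hsplit : (∃ C ∈ A.parts, IsConsecutiveIn C p) ↔
      IsConsecutiveIn B p ∨ ∃ C ∈ A.parts.erase B, IsConsecutiveIn C p := by
    conv_lhs => rw [← insert_erase hB]
    exact exists_mem_insert _ _ _
  rw [mem_insert, mem_arcs, mem_arcs, hsplit, Finpartition.parts_insertInPart, exists_mem_insert,
    isConsecutiveIn_insert_of_forall_lt (A.nonempty_of_mem_parts hB) hlt]
  tauto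

theorem fst_injOn_arcs (A : Finpartition (Icc 1 n)) :
    Set.InjOn Prod.fst (arcs n A : Set (ℕ × ℕ)) := by
  intro p hp p' hp' h
  obtain ⟨B, hB, h1, h2, hlt, hgap⟩ := mem_arcs.1 hp
  obtain ⟨B', hB', h1', h2', hlt', hgap'⟩ := mem_arcs.1 hp'
  obtain rfl : B = B' := A.eq_of_mem_parts hB hB' h1 (h ▸ h1')
  refine Prod.ext h (le_antisymm ?_ ?_) <;> by_contra hne
  · exact hgap _ h2' ⟨by omega, by omega⟩
  · exact hgap' _ h2 ⟨by omega, by omega⟩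

theorem exists_mem_arcs_of_lt {A : Finpartition (Icc 1 n)} {B : Finset ℕ} (hB : B ∈ A.parts)
    {i j : ℕ} (hi : i ∈ B) (hj : j ∈ B) (hij : i < j) : ∃ k, (i, k) ∈ arcs n A := by
  have hne : {x ∈ B | i < x}.Nonempty := ⟨j, mem_filter.2 ⟨hj, hij⟩⟩
  obtain ⟨hkB, hik⟩ := mem_filter.1 ({x ∈ B | i < x}.min'_mem hne)
  refine ⟨_, mem_arcs.2 ⟨B, hB, hi, hkB, hik, fun k hk ⟨hik', hkj⟩ => ?_⟩⟩
  exact (min'_le _ k (mem_filter.2 ⟨hk, hik'⟩)).not_gt hkj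

theorem sum_attach_parts_max' {β : Type*} [AddCommMonoid β] (A : Finpartition (Icc 1 n))
    (f : ℕ → β) :
    ∑ B ∈ A.parts.attach, f (B.1.max' (A.nonempty_of_mem_parts B.2)) =
      ∑ b ∈ Icc 1 n \ (arcs n A).image Prod.fst, f b := by
  refine sum_nbij (fun B => B.1.max' (A.nonempty_of_mem_parts B.2)) (fun B _ => ?_)
    (fun B _ B' _ h => Subtype.ext ?_) (fun b hb => ?_) fun _ _ => rfl
  · refine mem_sdiff.2 ⟨A.le B.2 (max'_mem _ _), fun hmem => ?_⟩
    obtain ⟨p, hp, hp1⟩ := mem_image.1 hmem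
    obtain ⟨C, hC, h1, h2, hlt, -⟩ := mem_arcs.1 hp
    have hCB : C = B.1 := A.eq_of_mem_parts hC B.2 h1 (hp1 ▸ max'_mem _ _)
    exact (hp1 ▸ hlt).not_ge (B.1.le_max' _ (hCB ▸ h2))
  · have hmem : B.1.max' (A.nonempty_of_mem_parts B.2) ∈ B'.1 := by
      simp only at h
      exact h ▸ max'_mem _ _
    exact A.eq_of_mem_parts B.2 B'.2 (max'_mem _ _) hmem
  · obtain ⟨hbI, hbL⟩ := mem_sdiff.1 hb
    have hpart : A.part b ∈ A.parts := A.part_mem.2 hbI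
    have hbpart : b ∈ A.part b := A.mem_part hbI
    refine ⟨⟨A.part b, hpart⟩, mem_coe.2 (mem_attach _ _), ?_⟩
    refine le_antisymm ?_ ((A.part b).le_max' b hbpart)
    by_contra hlt
    obtain ⟨k, hk⟩ := exists_mem_arcs_of_lt hpart hbpart (max'_mem _ _) (not_le.1 hlt)
    exact hbL (mem_image.2 ⟨(b, k), hk, rfl⟩)

theorem image_fst_arcs_subset (A : Finpartition (Icc 1 n)) :
    (arcs n A).image Prod.fst ⊆ Icc 1 n := fun i hi => by
  obtain ⟨p, hp, rfl⟩ := mem_image.1 hi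
  obtain ⟨B, hB, h1, -⟩ := mem_arcs.1 hp
  exact A.le hB h1

theorem card_arcs_le (A : Finpartition (Icc 1 n)) : #(arcs n A) ≤ n := by
  simpa [card_image_of_injOn (fst_injOn_arcs A)] using card_le_card (image_fst_arcs_subset A)

theorem card_Icc_sdiff_image_fst_arcs (A : Finpartition (Icc 1 n)) :
    #(Icc 1 n \ (arcs n A).image Prod.fst) = n - #(arcs n A) := by
  rw [card_sdiff_of_subset (image_fst_arcs_subset A), card_image_of_injOn (fst_injOn_arcs A),
    Nat.card_Icc, Nat.add_sub_cancel]

theorem sum_attach_parts_depthIncrement {β : Type*} [AddCommMonoid β]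
    (A : Finpartition (Icc 1 n)) (f : ℕ → β) :
    ∑ B ∈ A.parts.attach, f (B.1.max' (A.nonempty_of_mem_parts B.2) +
        #{p ∈ arcs n A | B.1.max' (A.nonempty_of_mem_parts B.2) < p.1}) =
      ∑ j ∈ Icc 1 (n - #(arcs n A)), f (#(arcs n A) + j) := by
  set L := (arcs n A).image Prod.fst
  have hcardL : #L = #(arcs n A) := card_image_of_injOn (fst_injOn_arcs A)
  have hincrement : ∀ b ∈ Icc 1 n \ L,
      b + #{p ∈ arcs n A | b < p.1} = #(arcs n A) + #{c ∈ Icc 1 n \ L | c ≤ b} := by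
    intro b hb
    have hfilter : #{p ∈ arcs n A | b < p.1} = #{x ∈ L | b < x} := by
      rw [filter_image, card_image_of_injOn ((fst_injOn_arcs A).mono (filter_subset _ _))]
    rw [hfilter, ← hcardL]
    exact add_card_filter_lt_eq_card_add_card_filter_le (image_fst_arcs_subset A) (mem_sdiff.1 hb).1
  rw [sum_attach_parts_max' A fun b => f (b + #{p ∈ arcs n A | b < p.1}),
    sum_congr rfl fun b hb => congrArg f (hincrement b hb),
    sum_card_filter_le (Icc 1 n \ L) fun j => f (#(arcs n A) + j),
    card_Icc_sdiff_image_fst_arcs]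

end Arcs

section Weight

variable {K : Type*} [Field K] {n : ℕ}

noncomputable def depthWeight (q : K) (n : ℕ)
    (A : Finpartition (Icc 1 n)) : K :=
  q ^ depthIndex n A * (1 - q⁻¹) ^ #(arcs n A)

theorem depthWeight_extendSingleton {q : K} (hq : q ≠ 0)
    (A : Finpartition (Icc 1 n)) :
    depthWeight q (n + 1) (A.extendSingleton succ_notMem_Icc_one insert_succ_Icc_one) =
      depthWeight q n A * q ^ #(arcs n A) := by
  rw [depthWeight, depthIndex_eq_depthStat, arcs_extendSingleton,
    depthStat_succ fun p hp => snd_le_of_mem_arcs hp, ← depthIndex_eq_depthStat, zpow_add₀ hq,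
    zpow_natCast, depthWeight, mul_right_comm]

theorem depthWeight_insertInPart {q : K} (hq : q ≠ 0)
    (A : Finpartition (Icc 1 n)) {B : Finset ℕ} (hB : B ∈ A.parts) :
    depthWeight q (n + 1) (A.insertInPart hB succ_notMem_Icc_one insert_succ_Icc_one) =
      depthWeight q n A * (1 - q⁻¹) *
        q ^ (B.max' (A.nonempty_of_mem_parts hB) +
          #{p ∈ arcs n A | B.max' (A.nonempty_of_mem_parts hB) < p.1}) := by
  have hS : ∀ p ∈ arcs n A, p.2 ≤ n := fun p hp => snd_le_of_mem_arcs hp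
  have hb := (mem_Icc.1 (A.le hB (max'_mem _ (A.nonempty_of_mem_parts hB)))).2
  have hnew : (B.max' (A.nonempty_of_mem_parts hB), n + 1) ∉ arcs n A := fun h => by
    have := hS _ h
    simp at this
  rw [depthWeight, depthIndex_eq_depthStat, arcs_insertInPart, depthStat_succ_insert hS hb,
    card_insert_of_notMem hnew, ← depthIndex_eq_depthStat, add_assoc, zpow_add₀ hq,
    ← Nat.cast_add, zpow_natCast, depthWeight, pow_succ]
  ring

theorem depthWeight_extendSingleton_add_sum_insertInPart {q : K} (hq : q ≠ 0)
    (A : Finpartition (Icc 1 n)) :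
    depthWeight q (n + 1) (A.extendSingleton succ_notMem_Icc_one insert_succ_Icc_one) +
        ∑ B ∈ A.parts.attach,
          depthWeight q (n + 1) (A.insertInPart B.2 succ_notMem_Icc_one insert_succ_Icc_one) =
      depthWeight q n A * q ^ n := by
  rw [depthWeight_extendSingleton hq, sum_congr rfl fun B _ => depthWeight_insertInPart hq A B.2,
    ← mul_sum, sum_attach_parts_depthIncrement A (q ^ ·), mul_assoc, ← mul_add,
    pow_add_one_sub_inv_mul_sum hq, Nat.add_sub_cancel' (card_arcs_le A)]

theorem sum_depthWeight_Icc_zero (q : K) :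
    ∑ A : Finpartition (Icc 1 0), depthWeight q 0 A = 1 := by
  have : Unique (Finpartition (Icc 1 0)) := by
    rw [show (Icc 1 0 : Finset ℕ) = ⊥ by simp]
    infer_instance
  simp [depthWeight, depthIndex, arcs]

end Weight

theorem sum_depthIndex_arcs_eq_general (n : ℕ) (q : ℚ) (hq : q ≠ 0) :
    ∑ A : Finpartition (Finset.Icc 1 n),
        q ^ depthIndex n A * (1 - q⁻¹) ^ (arcs n A).card
      = q ^ (n * (n - 1) / 2) := by
  change ∑ A, depthWeight q n A = _
  induction n with
  | zero => exact (sum_depthWeight_Icc_zero q).trans (pow_zero q).symm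
  | succ n ih =>
    rw [Finpartition.sum_finpartition_insert succ_notMem_Icc_one insert_succ_Icc_one,
      sum_congr rfl fun A _ => depthWeight_extendSingleton_add_sum_insertInPart hq A,
      ← sum_mul, ih, ← pow_add, ← Nat.choose_two_right, ← Nat.choose_two_right,
      Nat.choose_succ_succ', Nat.choose_one_right, add_comm]

/-- For `n ≥ 1` and every nonzero rational `q`,
`Σ_{A ∈ Π_n} q^{t(A)} (1 − q⁻¹)^{a(A)} = q^{n(n−1)/2}`, where `a(A)` is the number of
arcs of `A`. -/
theorem sum_depthIndex_arcs_eq (n : ℕ) (hn : 1 ≤ n) (q : ℚ) (hq : q ≠ 0) :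
    ∑ A : Finpartition (Finset.Icc 1 n),
        q ^ depthIndex n A * (1 - q⁻¹) ^ (arcs n A).card
      = q ^ (n * (n - 1) / 2) :=
  sum_depthIndex_arcs_eq_general n q hq
end
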